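/- arXiv:math/0408204 — 7 statements merged into one kernel-verified Lean document; each statement's English description precedes it below -/
import Mathlib

section
/- For indeterminates x_1,...,x_{2n} and y_1,...,y_{2n}, the Pfaffian of the 2n×2n skew-symmetric matrix whose (i,j) entry for i<j is x_i y_j equals (x_1 x_3 ⋯ x_{2n-1})·(y_2 y_4 ⋯ y_{2n}). -/
/-- The set of permutations of `Fin (2*n)` encoding perfect matchings:
`σ` pairs `σ(2i) < σ(2i+1)` with the smaller elements increasing. -/
def pfMatchings (n : ℕ) : Finset (Equiv.Perm (Fin (2 * n))) :=
  Finset.univ.filter (fun σ =>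
    (∀ i : Fin n, σ ⟨2 * i.1, by have := i.2; omega⟩ < σ ⟨2 * i.1 + 1, by have := i.2; omega⟩) ∧
    (∀ i j : Fin n, i < j →
      σ ⟨2 * i.1, by have := i.2; omega⟩ < σ ⟨2 * j.1, by have := j.2; omega⟩))

/-- The Pfaffian of a `2n × 2n` matrix, as the signed sum over perfect matchings
of the products of the entries `A (σ (2i)) (σ (2i+1))`. -/
def pf {R : Type*} [CommRing R] {n : ℕ} (A : Matrix (Fin (2 * n)) (Fin (2 * n)) R) : R :=
  ∑ σ ∈ pfMatchings n,
    ((Equiv.Perm.sign σ : ℤ) : R) *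
      ∏ i : Fin n,
        A (σ ⟨2 * i.1, by have := i.2; omega⟩) (σ ⟨2 * i.1 + 1, by have := i.2; omega⟩)




namespace PfProof

open Equiv Finset

variable {n : ℕ}

/-- value of `σ` at a natural-number position, junk value outside the range -/
def v (σ : Equiv.Perm (Fin (2*n))) (m : ℕ) : ℕ :=
  if h : m < 2*n then (σ ⟨m, h⟩).1 else 2*n

lemma v_eq (σ : Equiv.Perm (Fin (2*n))) {m : ℕ} (h : m < 2*n) :
    v σ m = (σ ⟨m, h⟩).1 := dif_pos h

lemma v_lt (σ : Equiv.Perm (Fin (2*n))) {m : ℕ} (h : m < 2*n) : v σ m < 2*n := by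
  rw [v_eq σ h]; exact (σ ⟨m, h⟩).2

lemma v_inj (σ : Equiv.Perm (Fin (2*n))) {a b : ℕ} (ha : a < 2*n) (hb : b < 2*n)
    (h : v σ a = v σ b) : a = b := by
  rw [v_eq σ ha, v_eq σ hb] at h
  have := σ.injective (Fin.val_injective h)
  exact congrArg Fin.val this

lemma v_one {m : ℕ} (h : m < 2*n) : v (1 : Equiv.Perm (Fin (2*n))) m = m := by
  rw [v_eq _ h]; rfl

lemma exists_pos (σ : Equiv.Perm (Fin (2*n))) {t : ℕ} (ht : t < 2*n) :
    ∃ p, p < 2*n ∧ v σ p = t := by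
  refine ⟨(σ.symm ⟨t, ht⟩).1, (σ.symm ⟨t, ht⟩).2, ?_⟩
  rw [v_eq σ (σ.symm ⟨t, ht⟩).2]
  simp

lemma mem_pf_iff (σ : Equiv.Perm (Fin (2*n))) :
    σ ∈ pfMatchings n ↔
      (∀ i, i < n → v σ (2*i) < v σ (2*i+1)) ∧
      (∀ i j, i < j → j < n → v σ (2*i) < v σ (2*j)) := by
  simp only [pfMatchings, mem_filter, mem_univ, true_and]
  constructor
  · rintro ⟨h1, h2⟩
    refine ⟨fun i hi => ?_, fun i j hij hj => ?_⟩
    · have := h1 ⟨i, hi⟩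
      rw [Fin.lt_def] at this
      rw [v_eq σ (by omega), v_eq σ (by omega)]
      exact this
    · have := h2 ⟨i, by omega⟩ ⟨j, hj⟩ (Fin.mk_lt_mk.mpr hij)
      rw [Fin.lt_def] at this
      rw [v_eq σ (by omega), v_eq σ (by omega)]
      exact this
  · rintro ⟨h1, h2⟩
    refine ⟨fun i => ?_, fun i j hij => ?_⟩
    · have := h1 i.1 i.2
      rw [v_eq σ (by have := i.2; omega), v_eq σ (by have := i.2; omega)] at this
      rwa [Fin.lt_def]
    · have := h2 i.1 j.1 (Fin.lt_def.mp hij) j.2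
      rw [v_eq σ (by have := i.2; omega), v_eq σ (by have := j.2; omega)] at this
      rwa [Fin.lt_def]

lemma even_canonical (σ : Equiv.Perm (Fin (2*n))) (hσ : σ ∈ pfMatchings n) :
    ∀ i, i < n → (∀ j, j < i → v σ (2*j+1) = v σ (2*j) + 1) → v σ (2*i) = 2*i := by
  obtain ⟨h1, h2⟩ := (mem_pf_iff σ).1 hσ
  intro i
  induction i using Nat.strong_induction_on with
  | _ i IH =>
    intro hi hc
    have hcan : ∀ m, m < 2*i → v σ m = m := by
      intro m hm
      rcases Nat.even_or_odd m with ⟨j, hj⟩ | ⟨j, hj⟩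
      · have hm2 : m = 2*j := by omega
        subst hm2
        exact IH j (by omega) (by omega) (fun j' hj' => hc j' (by omega))
      · have hm2 : m = 2*j+1 := by omega
        subst hm2
        have e1 := IH j (by omega) (by omega) (fun j' hj' => hc j' (by omega))
        have e2 := hc j (by omega)
        omega
    have h2i : 2*i < 2*n := by omega
    have hge : 2*i ≤ v σ (2*i) := by
      by_contra hlt
      push_neg at hlt
      have hx := hcan (v σ (2*i)) hlt
      have := v_inj σ (by omega) h2i hx
      omega
    obtain ⟨p, hplt, hvp⟩ := exists_pos σ h2i
    have hpge : 2*i ≤ p := by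
      by_contra hplt2
      push_neg at hplt2
      have := hcan p hplt2
      omega
    rcases eq_or_lt_of_le hpge with heq | hgt
    · rw [← heq] at hvp; exact hvp
    · exfalso
      rcases Nat.even_or_odd p with ⟨j, hj⟩ | ⟨j, hj⟩
      · have hp2 : p = 2*j := by omega
        subst hp2
        have := h2 i j (by omega) (by omega)
        omega
      · have hp2 : p = 2*j+1 := by omega
        subst hp2
        have := h1 j (by omega)
        have hlt : v σ (2*j) < 2*i := by omega
        have hx := hcan (v σ (2*j)) hlt
        have := v_inj σ (by omega) (by omega) hx
        omega

lemma eq_one_of_canonical (σ : Equiv.Perm (Fin (2*n))) (hσ : σ ∈ pfMatchings n)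
    (hc : ∀ i, i + 1 < n → v σ (2*i+1) = v σ (2*i) + 1) : σ = 1 := by
  have hfull : ∀ i, i < n → v σ (2*i+1) = v σ (2*i) + 1 := by
    intro i hi
    rcases Nat.lt_or_ge (i+1) n with h | h
    · exact hc i h
    · have heven : v σ (2*i) = 2*i :=
        even_canonical σ hσ i hi (fun j hj => hc j (by omega))
      have hlt := ((mem_pf_iff σ).1 hσ).1 i hi
      have hub := v_lt σ (show 2*i+1 < 2*n by omega)
      omega
  have hcan : ∀ m, m < 2*n → v σ m = m := by
    intro m hm
    rcases Nat.even_or_odd m with ⟨j, hj⟩ | ⟨j, hj⟩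
    · have hm2 : m = 2*j := by omega
      subst hm2
      exact even_canonical σ hσ j (by omega) (fun j' hj' => hfull j' (by omega))
    · have hm2 : m = 2*j+1 := by omega
      subst hm2
      have e1 := even_canonical σ hσ j (by omega) (fun j' hj' => hfull j' (by omega))
      have e2 := hfull j (by omega)
      omega
  apply Equiv.ext
  intro m
  have := hcan m.1 m.2
  rw [v_eq σ m.2] at this
  apply Fin.ext
  simpa using this

end PfProof
namespace PfProof

open Equiv Finset

variable {n : ℕ}

lemma key (σ : Equiv.Perm (Fin (2*n))) (hσ : σ ∈ pfMatchings n) {k : ℕ} (hk : k < n)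
    (hmin : ∀ j, j < k → v σ (2*j+1) = v σ (2*j) + 1)
    (hbad : v σ (2*k+1) ≠ v σ (2*k) + 1) :
    k + 1 < n ∧ v σ (2*k) = 2*k ∧ 2*k+2 ≤ v σ (2*k+1) ∧ v σ (2*k+2) = 2*k+1 := by
  obtain ⟨h1, h2⟩ := (mem_pf_iff σ).1 hσ
  have hcan : ∀ m, m < 2*k → v σ m = m := by
    intro m hm
    rcases Nat.even_or_odd m with ⟨j, hj⟩ | ⟨j, hj⟩
    · have hm2 : m = 2*j := by omega
      subst hm2
      exact even_canonical σ hσ j (by omega) (fun j' hj' => hmin j' (by omega))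
    · have hm2 : m = 2*j+1 := by omega
      subst hm2
      have e1 := even_canonical σ hσ j (by omega) (fun j' hj' => hmin j' (by omega))
      have e2 := hmin j (by omega)
      omega
  have hek : v σ (2*k) = 2*k := even_canonical σ hσ k hk hmin
  have hok : 2*k+2 ≤ v σ (2*k+1) := by
    have := h1 k hk
    omega
  have hk1 : k + 1 < n := by
    have := v_lt σ (show 2*k+1 < 2*n by omega)
    omega
  refine ⟨hk1, hek, hok, ?_⟩
  obtain ⟨p, hplt, hvp⟩ := exists_pos σ (show 2*k+1 < 2*n by omega)
  have hpge : 2*k+2 ≤ p := by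
    rcases Nat.lt_or_ge p (2*k) with h | h
    · have := hcan p h; omega
    · rcases Nat.lt_or_ge p (2*k+2) with h' | h'
      · exfalso
        have hpk : p = 2*k ∨ p = 2*k+1 := by omega
        rcases hpk with rfl | rfl <;> omega
      · exact h'
  rcases Nat.even_or_odd p with ⟨j, hj⟩ | ⟨j, hj⟩
  · have hp2 : p = 2*j := by omega
    subst hp2
    rcases Nat.lt_or_ge (k+1) j with hgt | hle
    · exfalso
      have := h2 (k+1) j hgt (by omega)
      have hvlt : v σ (2*k+2) < 2*k+1 := by
        rw [(by ring : 2*(k+1) = 2*k+2)] at this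
        omega
      rcases Nat.lt_or_ge (v σ (2*k+2)) (2*k) with h' | h'
      · have hx := hcan (v σ (2*k+2)) h'
        have := v_inj σ (by omega) (by omega) hx
        omega
      · have hx : v σ (2*k+2) = v σ (2*k) := by omega
        have := v_inj σ (by omega) (by omega) hx
        omega
    · have : j = k + 1 := by omega
      subst this
      rw [(by ring : 2*k+2 = 2*(k+1))]
      omega
  · exfalso
    have hp2 : p = 2*j+1 := by omega
    subst hp2
    have hjk : k + 1 ≤ j := by omega
    have := h1 j (by omega)
    have hvlt : v σ (2*j) < 2*k+1 := by omega
    rcases Nat.lt_or_ge (v σ (2*j)) (2*k) with h' | h'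
    · have hx := hcan (v σ (2*j)) h'
      have := v_inj σ (by omega) (by omega) hx
      omega
    · have hx : v σ (2*j) = v σ (2*k) := by omega
      have := v_inj σ (by omega) (by omega) hx
      omega

/-- The "bad index" predicate: pair `k` is not canonical (and is not the last pair). -/
def Q (σ : Equiv.Perm (Fin (2*n))) (k : ℕ) : Prop :=
  k + 1 < n ∧ v σ (2*k+1) ≠ v σ (2*k) + 1

instance (σ : Equiv.Perm (Fin (2*n))) : DecidablePred (Q σ) := fun k => by
  unfold Q; infer_instance

lemma exists_Q (σ : Equiv.Perm (Fin (2*n))) (hσ : σ ∈ pfMatchings n) (hne : σ ≠ 1) :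
    ∃ k, Q σ k := by
  by_contra h
  push_neg at h
  apply hne
  apply eq_one_of_canonical σ hσ
  intro i hi
  by_contra hbad
  exact h i ⟨hi, hbad⟩

open scoped Classical in
/-- The sign-reversing involution: swap the two odd positions of the first two
non-canonical pairs. -/
noncomputable def flip (σ : Equiv.Perm (Fin (2*n))) : Equiv.Perm (Fin (2*n)) :=
  if h : ∃ k, Q σ k then
    σ * Equiv.swap ⟨2*(Nat.find h)+1, by have := (Nat.find_spec h).1; omega⟩
      ⟨2*(Nat.find h)+3, by have := (Nat.find_spec h).1; omega⟩
  else σ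

lemma v_mul_swap_ne (σ : Equiv.Perm (Fin (2*n))) {a b : Fin (2*n)} {m : ℕ} (hm : m < 2*n)
    (h1 : m ≠ a.1) (h2 : m ≠ b.1) : v (σ * Equiv.swap a b) m = v σ m := by
  rw [v_eq _ hm, v_eq σ hm]
  rw [Equiv.Perm.mul_apply]
  rw [Equiv.swap_apply_of_ne_of_ne (fun hc => h1 (congrArg Fin.val hc))
    (fun hc => h2 (congrArg Fin.val hc))]

lemma v_mul_swap_left (σ : Equiv.Perm (Fin (2*n))) (a b : Fin (2*n)) :
    v (σ * Equiv.swap a b) a.1 = v σ b.1 := by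
  rw [v_eq _ a.2, v_eq σ b.2]
  rw [Equiv.Perm.mul_apply]
  congr 1
  rw [show (⟨a.1, a.2⟩ : Fin (2*n)) = a from rfl, Equiv.swap_apply_left]

lemma v_mul_swap_right (σ : Equiv.Perm (Fin (2*n))) (a b : Fin (2*n)) :
    v (σ * Equiv.swap a b) b.1 = v σ a.1 := by
  rw [v_eq _ b.2, v_eq σ a.2]
  rw [Equiv.Perm.mul_apply]
  congr 1
  rw [show (⟨b.1, b.2⟩ : Fin (2*n)) = b from rfl, Equiv.swap_apply_right]

end PfProof
namespace PfProof

open Equiv Finset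

variable {n : ℕ}

def ee (i : Fin n) : Fin (2*n) := ⟨2*i.1, by have := i.2; omega⟩
def oo (i : Fin n) : Fin (2*n) := ⟨2*i.1+1, by have := i.2; omega⟩

lemma ee_val (i : Fin n) : (ee i).1 = 2*i.1 := rfl
lemma oo_val (i : Fin n) : (oo i).1 = 2*i.1+1 := rfl

lemma flip_eq_of_find (σ : Equiv.Perm (Fin (2*n))) (h : ∃ k, Q σ k) {K : ℕ}
    (hfind : Nat.find h = K) (hK : K + 1 < n) :
    flip σ = σ * Equiv.swap ⟨2*K+1, by omega⟩ ⟨2*K+3, by omega⟩ := by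
  subst hfind
  unfold flip
  rw [dif_pos h]

lemma flip_spec (σ : Equiv.Perm (Fin (2*n))) (hσ : σ ∈ pfMatchings n) (hne : σ ≠ 1) :
    ∃ (K : ℕ) (hK : K + 1 < n),
      Equiv.Perm.sign (flip σ) = - Equiv.Perm.sign σ ∧
      (∀ i : Fin n, flip σ (ee i) = σ (ee i)) ∧
      (∀ i : Fin n, i.1 ≠ K → i.1 ≠ K+1 → flip σ (oo i) = σ (oo i)) ∧
      flip σ (oo ⟨K, by omega⟩) = σ (oo ⟨K+1, hK⟩) ∧
      flip σ (oo ⟨K+1, hK⟩) = σ (oo ⟨K, by omega⟩) ∧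
      flip σ ∈ pfMatchings n ∧ flip σ ≠ 1 ∧ flip (flip σ) = σ ∧ flip σ ≠ σ := by
  classical
  have hex : ∃ k, Q σ k := exists_Q σ hσ hne
  set K := Nat.find hex with hKdef
  have hQK : Q σ K := Nat.find_spec hex
  have hK1 : K + 1 < n := hQK.1
  have hmin : ∀ j, j < K → v σ (2*j+1) = v σ (2*j) + 1 := by
    intro j hj
    have hnQ := Nat.find_min hex hj
    unfold Q at hnQ
    push_neg at hnQ
    exact hnQ (by omega)
  obtain ⟨-, hvE, hvO, hvE2⟩ := key σ hσ (by omega) hmin hQK.2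
  have hvO3 : 2*K+1 < v σ (2*K+3) := by
    have := ((mem_pf_iff σ).1 hσ).1 (K+1) hK1
    rw [(show 2*(K+1)+1 = 2*K+3 by ring), (show 2*(K+1) = 2*K+2 by ring)] at this
    omega
  set a : Fin (2*n) := ⟨2*K+1, by omega⟩ with ha
  set b : Fin (2*n) := ⟨2*K+3, by omega⟩ with hb
  have hav : a.1 = 2*K+1 := by rw [ha]
  have hbv : b.1 = 2*K+3 := by rw [hb]
  have hab' : a ≠ b := Fin.ne_of_val_ne (by rw [hav, hbv]; omega)
  have hflip : flip σ = σ * Equiv.swap a b := flip_eq_of_find σ hex hKdef.symm hK1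
  set τ := σ * Equiv.swap a b with hτ
  have hvne : ∀ m, m < 2*n → m ≠ 2*K+1 → m ≠ 2*K+3 → v τ m = v σ m := by
    intro m hm hm1 hm2
    exact v_mul_swap_ne σ hm hm1 hm2
  have hvA : v τ (2*K+1) = v σ (2*K+3) := v_mul_swap_left σ a b
  have hvB : v τ (2*K+3) = v σ (2*K+1) := v_mul_swap_right σ a b
  obtain ⟨h1, h2⟩ := (mem_pf_iff σ).1 hσ
  have hτmem : τ ∈ pfMatchings n := by
    rw [mem_pf_iff]
    constructor
    · intro i hi
      have hei : v τ (2*i) = v σ (2*i) := hvne (2*i) (by omega) (by omega) (by omega)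
      rcases eq_or_ne i K with rfl | hiK
      · rw [hei, hvA]
        omega
      · rcases eq_or_ne i (K+1) with rfl | hiK1
        · rw [hei, (show 2*(K+1)+1 = 2*K+3 by ring), hvB,
            (show 2*(K+1) = 2*K+2 by ring)]
          omega
        · rw [hei, hvne (2*i+1) (by omega) (by omega) (by omega)]
          exact h1 i hi
    · intro i j hij hj
      rw [hvne (2*i) (by omega) (by omega) (by omega),
          hvne (2*j) (by omega) (by omega) (by omega)]
      exact h2 i j hij hj
  have hτne1 : τ ≠ 1 := by
    intro h
    have hA := hvA
    rw [h, v_one (by omega)] at hA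
    omega
  have hQτK : Q τ K := by
    refine ⟨hK1, ?_⟩
    rw [hvA, hvne (2*K) (by omega) (by omega) (by omega), hvE]
    omega
  have hexτ : ∃ k, Q τ k := ⟨K, hQτK⟩
  have hfindτ : Nat.find hexτ = K := by
    rw [Nat.find_eq_iff]
    refine ⟨hQτK, fun j hj hQj => ?_⟩
    apply hQj.2
    rw [hvne (2*j+1) (by omega) (by omega) (by omega),
        hvne (2*j) (by omega) (by omega) (by omega)]
    exact hmin j hj
  have hflip2 : flip τ = τ * Equiv.swap a b := flip_eq_of_find τ hexτ hfindτ hK1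
  refine ⟨K, hK1, ?_, ?_, ?_, ?_, ?_, ?_, ?_, ?_, ?_⟩
  · rw [hflip, map_mul, Equiv.Perm.sign_swap hab', mul_neg_one]
  · intro i
    rw [hflip, Equiv.Perm.mul_apply,
      Equiv.swap_apply_of_ne_of_ne (Fin.ne_of_val_ne (by rw [ee_val, hav]; omega))
        (Fin.ne_of_val_ne (by rw [ee_val, hbv]; omega))]
  · intro i hi1 hi2
    rw [hflip, Equiv.Perm.mul_apply,
      Equiv.swap_apply_of_ne_of_ne (Fin.ne_of_val_ne (by rw [oo_val, hav]; omega))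
        (Fin.ne_of_val_ne (by rw [oo_val, hbv]; omega))]
  · have e1 : oo ⟨K, by omega⟩ = a := Fin.ext (by rw [oo_val, hav])
    have e2 : b = oo ⟨K+1, hK1⟩ := Fin.ext (by simp only [oo_val, hbv, Fin.val_mk]; omega)
    rw [hflip, Equiv.Perm.mul_apply, e1, Equiv.swap_apply_left, e2]
  · have e1 : oo ⟨K+1, hK1⟩ = b := Fin.ext (by simp only [oo_val, hbv, Fin.val_mk]; omega)
    have e2 : a = oo ⟨K, by omega⟩ := Fin.ext (by rw [oo_val, hav])
    rw [hflip, Equiv.Perm.mul_apply, e1, Equiv.swap_apply_right, e2]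
  · rw [hflip]; exact hτmem
  · rw [hflip]; exact hτne1
  · rw [hflip, hflip2, hτ, mul_assoc, Equiv.swap_mul_self, mul_one]
  · rw [hflip]
    intro h
    exact hab' (Equiv.swap_eq_one_iff.mp (mul_eq_left.mp h))

end PfProof
namespace PfProof

open Equiv Finset

variable {n : ℕ}

lemma pf_aux {R : Type*} [CommRing R] (x y : Fin (2*n) → R)
    (A : Matrix (Fin (2*n)) (Fin (2*n)) R)
    (hA : ∀ a b : Fin (2*n), a.1 < b.1 → A a b = x a * y b) :
    ∑ σ ∈ pfMatchings n, ((Equiv.Perm.sign σ : ℤ) : R) * ∏ i : Fin n, A (σ (ee i)) (σ (oo i))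
      = (∏ i : Fin n, x (ee i)) * ∏ i : Fin n, y (oo i) := by
  classical
  have hpf : ∀ ρ ∈ pfMatchings n, ∀ i : Fin n, (ρ (ee i)).1 < (ρ (oo i)).1 := by
    intro ρ hρ i
    have := ((mem_pf_iff ρ).1 hρ).1 i.1 i.2
    rw [v_eq ρ (by have := i.2; omega), v_eq ρ (by have := i.2; omega)] at this
    exact this
  have hprodform : ∀ ρ ∈ pfMatchings n,
      ∏ i : Fin n, A (ρ (ee i)) (ρ (oo i))
        = (∏ i : Fin n, x (ρ (ee i))) * ∏ i : Fin n, y (ρ (oo i)) := by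
    intro ρ hρ
    rw [← Finset.prod_mul_distrib]
    exact Finset.prod_congr rfl fun i _ => hA _ _ (hpf ρ hρ i)
  have h1mem : (1 : Equiv.Perm (Fin (2*n))) ∈ pfMatchings n := by
    rw [mem_pf_iff]
    constructor
    · intro i hi
      rw [v_one (by omega), v_one (by omega)]
      omega
    · intro i j hij hj
      rw [v_one (by omega), v_one (by omega)]
      omega
  rw [← Finset.add_sum_erase _ _ h1mem]
  have hzero : ∑ σ ∈ (pfMatchings n).erase 1,
      (((Equiv.Perm.sign σ : ℤ) : R) * ∏ i : Fin n, A (σ (ee i)) (σ (oo i))) = 0 := by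
    refine Finset.sum_involution (fun σ _ => flip σ) ?_ ?_ ?_ ?_
    · intro σ hσ
      obtain ⟨hσ1, hσm⟩ := Finset.mem_erase.1 hσ
      obtain ⟨K, hK, hsign, hee, hoo, hoK, hoK1, hmem, hne1, hinv, hneself⟩ :=
        flip_spec σ hσm hσ1
      have hx : ∏ i : Fin n, x (flip σ (ee i)) = ∏ i : Fin n, x (σ (ee i)) :=
        Finset.prod_congr rfl fun i _ => by rw [hee i]
      set c : Equiv.Perm (Fin n) := Equiv.swap ⟨K, by omega⟩ ⟨K+1, hK⟩ with hc
      have hy : ∀ i : Fin n, flip σ (oo i) = σ (oo (c i)) := by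
        intro i
        rcases eq_or_ne i ⟨K, by omega⟩ with rfl | hiK
        · rw [hc, Equiv.swap_apply_left]
          exact hoK
        · rcases eq_or_ne i ⟨K+1, hK⟩ with rfl | hiK1
          · rw [hc, Equiv.swap_apply_right]
            exact hoK1
          · rw [hc, Equiv.swap_apply_of_ne_of_ne hiK hiK1]
            exact hoo i (fun h => hiK (Fin.ext h)) (fun h => hiK1 (Fin.ext h))
      have hy2 : ∏ i : Fin n, y (flip σ (oo i)) = ∏ i : Fin n, y (σ (oo i)) := by
        calc ∏ i : Fin n, y (flip σ (oo i)) = ∏ i : Fin n, y (σ (oo (c i))) :=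
              Finset.prod_congr rfl fun i _ => by rw [hy i]
          _ = ∏ i : Fin n, y (σ (oo i)) := Equiv.prod_comp c (fun i => y (σ (oo i)))
      rw [hprodform σ hσm, hprodform _ hmem, hx, hy2]
      have hs : ((Equiv.Perm.sign (flip σ) : ℤ) : R) = -((Equiv.Perm.sign σ : ℤ) : R) := by
        rw [hsign]
        push_cast
        ring
      rw [hs]
      ring
    · intro σ hσ _
      obtain ⟨hσ1, hσm⟩ := Finset.mem_erase.1 hσ
      obtain ⟨K, hK, hsign, hee, hoo, hoK, hoK1, hmem, hne1, hinv, hneself⟩ :=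
        flip_spec σ hσm hσ1
      exact hneself
    · intro σ hσ
      obtain ⟨hσ1, hσm⟩ := Finset.mem_erase.1 hσ
      obtain ⟨K, hK, hsign, hee, hoo, hoK, hoK1, hmem, hne1, hinv, hneself⟩ :=
        flip_spec σ hσm hσ1
      exact Finset.mem_erase.2 ⟨hne1, hmem⟩
    · intro σ hσ
      obtain ⟨hσ1, hσm⟩ := Finset.mem_erase.1 hσ
      obtain ⟨K, hK, hsign, hee, hoo, hoK, hoK1, hmem, hne1, hinv, hneself⟩ :=
        flip_spec σ hσm hσ1
      exact hinv
  rw [hzero, add_zero, hprodform 1 h1mem]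
  simp

end PfProof

/-- the Pfaffian of the skew-symmetric matrix with `(i,j)` entry `x i * y j`
for `i < j` equals `x₁x₃⋯x_{2n-1} · y₂y₄⋯y_{2n}` (1-indexed). -/
theorem pf_of_product (R : Type*) [CommRing R] (n : ℕ) (x y : Fin (2 * n) → R) :
    pf (Matrix.of fun i j : Fin (2 * n) =>
        if i < j then x i * y j else if j < i then -(x j * y i) else 0) =
      (∏ i : Fin n, x ⟨2 * i.1, by have := i.2; omega⟩) *
        ∏ i : Fin n, y ⟨2 * i.1 + 1, by have := i.2; omega⟩ := by
  have hA : ∀ a b : Fin (2 * n), a.1 < b.1 →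
      (Matrix.of fun i j : Fin (2 * n) =>
        if i < j then x i * y j else if j < i then -(x j * y i) else 0) a b = x a * y b := by
    intro a b hab
    have h : a < b := hab
    simp [Matrix.of_apply, h]
  exact PfProof.pf_aux x y _ hA
end

section
/- Let λ = (λ_1,...,λ_{2n}) be a partition with at most 2n parts and set l_i = λ_i + 2n - i. Define the skew-symmetric 2n×2n matrix A with entries α_{ij} = a^{⌈(l_i−1)/2⌉} b^{⌊(l_i−1)/2⌋} c^{⌈l_j/2⌉} d^{⌊l_j/2⌋} for i<j. Then Pf(A) = (abcd)^{n(n−1)/2} · ω(λ), where ω(λ) = a^{Σ_i ⌈λ_{2i−1}/2⌉} b^{Σ_i ⌊λ_{2i−1}/2⌋} c^{Σ_i ⌈λ_{2i}/2⌉} d^{Σ_i ⌊λ_{2i}/2⌋}. -/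
namespace PfAux

lemma mem_pfMatchings {n : ℕ} (σ : Equiv.Perm (Fin (2 * n))) :
    σ ∈ pfMatchings n ↔
    (∀ i : Fin n, σ ⟨2 * i.1, by have := i.2; omega⟩ < σ ⟨2 * i.1 + 1, by have := i.2; omega⟩) ∧
    (∀ i j : Fin n, i < j →
      σ ⟨2 * i.1, by have := i.2; omega⟩ < σ ⟨2 * j.1, by have := j.2; omega⟩) := by
  simp [pfMatchings]

lemma one_mem_pfMatchings (n : ℕ) : (1 : Equiv.Perm (Fin (2 * n))) ∈ pfMatchings n := by
  rw [mem_pfMatchings]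
  refine ⟨fun i => ?_, fun i j hij => ?_⟩
  · simp [Fin.lt_def]
  · simp only [Equiv.Perm.one_apply, Fin.lt_def]
    have := hij
    simp only [Fin.lt_def] at this
    omega

variable {m : ℕ}

/-- Total version of `Fin.mk` for `Fin (2*(m+1))`. -/
def ep (m i : ℕ) : Fin (2 * (m + 1)) := ⟨i % (2 * (m + 1)), Nat.mod_lt _ (by omega)⟩

lemma ep_val {i : ℕ} (h : i < 2 * (m + 1)) : ep m i = ⟨i, h⟩ := by
  simp only [ep, Fin.mk.injEq]
  exact Nat.mod_eq_of_lt h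

lemma ep_ne {i j : ℕ} (hi : i < 2 * (m + 1)) (hj : j < 2 * (m + 1)) (hij : i ≠ j) :
    ep m i ≠ ep m j := by
  rw [ep_val hi, ep_val hj]
  simp [Fin.ext_iff, hij]

/-- the "crossing" predicate -/
def Q (σ : Equiv.Perm (Fin (2 * (m + 1)))) (k : ℕ) : Prop :=
  2 * k + 3 < 2 * (m + 1) ∧ σ (ep m (2 * k + 2)) < σ (ep m (2 * k + 1))

instance (σ : Equiv.Perm (Fin (2 * (m + 1)))) : DecidablePred (Q σ) := fun _ => instDecidableAnd

/-- a strictly monotone permutation of `Fin N` is the identity -/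
lemma strictMono_eq_one {N : ℕ} (σ : Equiv.Perm (Fin N)) (h : StrictMono σ) : σ = 1 := by
  have h2 : (σ : Fin N → Fin N) = id := by
    refine (h.range_inj strictMono_id).1 ?_
    rw [σ.surjective.range_eq, Set.range_id]
  ext x
  exact congrArg Fin.val (congrFun h2 x)

lemma exists_Q {σ : Equiv.Perm (Fin (2 * (m + 1)))} (hσ : σ ∈ pfMatchings (m + 1))
    (hne : σ ≠ 1) : ∃ k, Q σ k := by
  by_contra hc
  push_neg at hc
  apply hne
  rw [mem_pfMatchings] at hσ
  -- chain: successive values increase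
  have chain : ∀ j : ℕ, j + 1 < 2 * (m + 1) →
      ∀ (h1 : j < 2 * (m + 1)) (h2 : j + 1 < 2 * (m + 1)),
      σ ⟨j, h1⟩ < σ ⟨j + 1, h2⟩ := by
    intro j hj h1 h2
    rcases Nat.even_or_odd j with ⟨i, hi⟩ | ⟨i, hi⟩
    · have hin : i < m + 1 := by omega
      have hj2 : j = 2 * i := by omega
      subst hj2
      exact hσ.1 ⟨i, hin⟩
    · -- j = 2i+1, use ¬ Q σ i plus injectivity
      have hb : 2 * i + 3 < 2 * (m + 1) := by omega
      have hq := hc i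
      rw [Q] at hq
      push_neg at hq
      have hle := hq hb
      have hne2 : σ (ep m (2 * i + 2)) ≠ σ (ep m (2 * i + 1)) := by
        intro hE
        have := σ.injective hE
        exact absurd this (ep_ne (by omega) (by omega) (by omega))
      have hlt : σ (ep m (2 * i + 1)) < σ (ep m (2 * i + 2)) :=
        lt_of_le_of_ne hle (Ne.symm hne2)
      rw [ep_val (by omega : 2 * i + 1 < 2 * (m + 1)),
        ep_val (by omega : 2 * i + 2 < 2 * (m + 1))] at hlt
      have hj2 : j = 2 * i + 1 := by omega
      subst hj2
      exact hlt
  have mono : StrictMono σ := by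
    have key : ∀ jv : ℕ, ∀ (hj : jv < 2 * (m + 1)), ∀ iv, ∀ (hi : iv < 2 * (m + 1)),
        iv < jv → σ ⟨iv, hi⟩ < σ ⟨jv, hj⟩ := by
      intro jv
      induction jv with
      | zero => omega
      | succ j ih =>
        intro hj iv hi hlt
        have hstep := chain j (by omega) (by omega) hj
        rcases Nat.lt_or_ge iv j with h' | h'
        · exact lt_trans (ih (by omega) iv hi h') hstep
        · have : iv = j := by omega
          subst this
          exact hstep
    intro x y hxy
    have := key y.1 y.2 x.1 x.2 hxy
    simpa using this
  exact strictMono_eq_one σ mono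

open scoped Classical in
/-- The sign-reversing involution: swap the uppers of the first crossing consecutive pairs. -/
noncomputable def invp (σ : Equiv.Perm (Fin (2 * (m + 1)))) : Equiv.Perm (Fin (2 * (m + 1))) :=
  if h : ∃ k, Q σ k then
    σ * Equiv.swap (ep m (2 * Nat.find h + 1)) (ep m (2 * Nat.find h + 3))
  else σ

variable {σ : Equiv.Perm (Fin (2 * (m + 1)))}

lemma invp_eq (h : ∃ k, Q σ k) :
    invp σ = σ * Equiv.swap (ep m (2 * Nat.find h + 1)) (ep m (2 * Nat.find h + 3)) :=
  dif_pos h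

lemma findQ_bound (h : ∃ k, Q σ k) : 2 * Nat.find h + 3 < 2 * (m + 1) :=
  (Nat.find_spec h).1

lemma invp_apply_other (h : ∃ k, Q σ k) {j : ℕ} (hj : j < 2 * (m + 1))
    (h1 : j ≠ 2 * Nat.find h + 1) (h3 : j ≠ 2 * Nat.find h + 3) :
    invp σ (ep m j) = σ (ep m j) := by
  rw [invp_eq h, Equiv.Perm.mul_apply,
    Equiv.swap_apply_of_ne_of_ne (ep_ne hj (by have := findQ_bound h; omega) h1)
      (ep_ne hj (findQ_bound h) h3)]

lemma invp_apply_pos1 (h : ∃ k, Q σ k) :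
    invp σ (ep m (2 * Nat.find h + 1)) = σ (ep m (2 * Nat.find h + 3)) := by
  rw [invp_eq h, Equiv.Perm.mul_apply, Equiv.swap_apply_left]

lemma invp_apply_pos3 (h : ∃ k, Q σ k) :
    invp σ (ep m (2 * Nat.find h + 3)) = σ (ep m (2 * Nat.find h + 1)) := by
  rw [invp_eq h, Equiv.Perm.mul_apply, Equiv.swap_apply_right]

set_option maxHeartbeats 1000000 in
lemma Q_invp (hσ : σ ∈ pfMatchings (m + 1)) (h : ∃ k, Q σ k) :
    Q (invp σ) (Nat.find h) := by
  have hb := findQ_bound h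
  refine ⟨hb, ?_⟩
  rw [invp_apply_pos1 h, invp_apply_other h (by omega) (by omega) (by omega)]
  -- goal : σ (ep m (2 * Nat.find h + 2)) < σ (ep m (2 * Nat.find h + 3))
  rw [mem_pfMatchings] at hσ
  have hp := hσ.1 ⟨Nat.find h + 1, by omega⟩
  simp only at hp
  rw [ep_val (by omega : 2 * Nat.find h + 2 < 2 * (m + 1)),
    ep_val (by omega : 2 * Nat.find h + 3 < 2 * (m + 1))]
  exact hp

lemma not_Q_invp_of_lt (h : ∃ k, Q σ k) {i : ℕ} (hik : i < Nat.find h) :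
    ¬ Q (invp σ) i := by
  have hb := findQ_bound h
  intro hQ
  apply Nat.find_min h hik
  refine ⟨hQ.1, ?_⟩
  have h2 := hQ.2
  rwa [invp_apply_other h (by omega) (by omega) (by omega),
    invp_apply_other h (by omega) (by omega) (by omega)] at h2

lemma find_invp (hσ : σ ∈ pfMatchings (m + 1)) (h : ∃ k, Q σ k)
    (h' : ∃ k, Q (invp σ) k) : Nat.find h' = Nat.find h := by
  refine le_antisymm (Nat.find_min' h' (Q_invp hσ h)) ?_
  by_contra hc
  exact not_Q_invp_of_lt h (by omega) (Nat.find_spec h')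

lemma invp_invp (hσ : σ ∈ pfMatchings (m + 1)) (h : ∃ k, Q σ k) :
    invp (invp σ) = σ := by
  have h' : ∃ k, Q (invp σ) k := ⟨Nat.find h, Q_invp hσ h⟩
  rw [invp_eq h', find_invp hσ h h', invp_eq h, mul_assoc, Equiv.swap_mul_self, mul_one]

lemma invp_ne_self (h : ∃ k, Q σ k) : invp σ ≠ σ := by
  have hb := findQ_bound h
  intro hE
  have h1 : invp σ (ep m (2 * Nat.find h + 1)) = σ (ep m (2 * Nat.find h + 1)) := by
    rw [hE]
  rw [invp_apply_pos1 h] at h1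
  exact ep_ne (hb.trans_le le_rfl) (by omega) (by omega) (σ.injective h1)

lemma invp_ne_one (hσ : σ ∈ pfMatchings (m + 1)) (h : ∃ k, Q σ k) : invp σ ≠ 1 := by
  intro hE
  have := (Q_invp hσ h).2
  rw [hE] at this
  simp only [Equiv.Perm.one_apply] at this
  rw [ep_val (by have := findQ_bound h; omega), ep_val (by have := findQ_bound h; omega),
    Fin.mk_lt_mk] at this
  omega

lemma invp_mem (hσ : σ ∈ pfMatchings (m + 1)) (h : ∃ k, Q σ k) :
    invp σ ∈ pfMatchings (m + 1) := by
  have hb := findQ_bound h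
  rw [mem_pfMatchings] at hσ ⊢
  constructor
  · rintro ⟨iv, hiv⟩
    by_cases hik : iv = Nat.find h
    · subst hik
      simp only
      rw [← ep_val (by omega : 2 * Nat.find h < 2 * (m + 1)),
        ← ep_val (by omega : 2 * Nat.find h + 1 < 2 * (m + 1)),
        invp_apply_other h (by omega) (by omega) (by omega), invp_apply_pos1 h]
      calc σ (ep m (2 * Nat.find h)) < σ (ep m (2 * (Nat.find h + 1))) := by
            rw [ep_val (by omega), ep_val (by omega)]
            exact hσ.2 ⟨Nat.find h, by omega⟩ ⟨Nat.find h + 1, by omega⟩ (by simp [Fin.mk_lt_mk])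
        _ < σ (ep m (2 * Nat.find h + 3)) := by
            rw [ep_val (by omega), ep_val (by omega)]
            exact hσ.1 ⟨Nat.find h + 1, by omega⟩
    · by_cases hik1 : iv = Nat.find h + 1
      · subst hik1
        simp only
        rw [← ep_val (by omega : 2 * (Nat.find h + 1) < 2 * (m + 1)),
          ← ep_val (by omega : 2 * (Nat.find h + 1) + 1 < 2 * (m + 1)),
          invp_apply_other h (by omega) (by omega) (by omega)]
        have e1 : 2 * (Nat.find h + 1) + 1 = 2 * Nat.find h + 3 := rfl
        rw [e1, invp_apply_pos3 h]
        exact (Nat.find_spec h).2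
      · simp only
        rw [← ep_val (by omega : 2 * iv < 2 * (m + 1)),
          ← ep_val (by omega : 2 * iv + 1 < 2 * (m + 1)),
          invp_apply_other h (by omega) (by omega) (by omega),
          invp_apply_other h (by omega) (by omega) (by omega),
          ep_val (by omega : 2 * iv < 2 * (m + 1)),
          ep_val (by omega : 2 * iv + 1 < 2 * (m + 1))]
        exact hσ.1 ⟨iv, hiv⟩
  · rintro ⟨iv, hiv⟩ ⟨jv, hjv⟩ hij
    simp only
    rw [← ep_val (by omega : 2 * iv < 2 * (m + 1)),
      ← ep_val (by omega : 2 * jv < 2 * (m + 1)),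
      invp_apply_other h (by omega) (by omega) (by omega),
      invp_apply_other h (by omega) (by omega) (by omega),
      ep_val (by omega : 2 * iv < 2 * (m + 1)),
      ep_val (by omega : 2 * jv < 2 * (m + 1))]
    exact hσ.2 ⟨iv, hiv⟩ ⟨jv, hjv⟩ hij

lemma sign_invp (h : ∃ k, Q σ k) :
    Equiv.Perm.sign (invp σ) = - Equiv.Perm.sign σ := by
  have hb := findQ_bound h
  rw [invp_eq h, Equiv.Perm.sign_mul,
    Equiv.Perm.sign_swap (ep_ne (by omega) hb (by omega))]
  rw [mul_neg, mul_one]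

set_option maxHeartbeats 1000000 in
lemma prod_invp {R : Type*} [CommRing R] (f g : Fin (2 * (m + 1)) → R)
    (h : ∃ k, Q σ k) :
    (∏ i : Fin (m + 1), f (invp σ ⟨2 * i.1, by have := i.2; omega⟩) *
        g (invp σ ⟨2 * i.1 + 1, by have := i.2; omega⟩)) =
    ∏ i : Fin (m + 1), f (σ ⟨2 * i.1, by have := i.2; omega⟩) *
        g (σ ⟨2 * i.1 + 1, by have := i.2; omega⟩) := by
  have hb := findQ_bound h
  rw [Finset.prod_mul_distrib, Finset.prod_mul_distrib]
  congr 1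
  · apply Finset.prod_congr rfl
    intro i _
    congr 1
    rw [← ep_val (by have := i.2; omega : 2 * i.1 < 2 * (m + 1)),
      invp_apply_other h (by have := i.2; omega) (by omega) (by omega)]
  · have hkm : Nat.find h + 1 < m + 1 := by omega
    have hkm0 : Nat.find h < m + 1 := by omega
    rw [← Equiv.prod_comp (Equiv.swap (⟨Nat.find h, hkm0⟩ : Fin (m + 1)) ⟨Nat.find h + 1, hkm⟩)
      (fun i : Fin (m + 1) => g (σ ⟨2 * i.1 + 1, by have := i.2; omega⟩))]
    apply Finset.prod_congr rfl
    rintro ⟨iv, hiv⟩ _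
    by_cases h1 : iv = Nat.find h
    · subst h1
      rw [Equiv.swap_apply_left]
      simp only
      congr 1
      rw [← ep_val (by omega : 2 * Nat.find h + 1 < 2 * (m + 1)), invp_apply_pos1 h,
        ep_val (by omega : 2 * Nat.find h + 3 < 2 * (m + 1))]
      rfl
    · by_cases h2 : iv = Nat.find h + 1
      · subst h2
        rw [Equiv.swap_apply_right]
        simp only
        congr 1
        rw [← ep_val (by omega : 2 * (Nat.find h + 1) + 1 < 2 * (m + 1))]
        have e1 : (2 * (Nat.find h + 1) + 1) = 2 * Nat.find h + 3 := rfl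
        rw [e1, invp_apply_pos3 h, ep_val (by omega : 2 * Nat.find h + 1 < 2 * (m + 1))]
      · rw [Equiv.swap_apply_of_ne_of_ne (by simp [Fin.ext_iff, h1]) (by simp [Fin.ext_iff, h2])]
        simp only
        congr 1
        rw [← ep_val (by omega : 2 * iv + 1 < 2 * (m + 1)),
          invp_apply_other h (by omega) (by omega) (by omega)]

end PfAux

namespace PfAux

lemma perm_fin_zero_eq_one (σ : Equiv.Perm (Fin (2 * 0))) : σ = 1 :=
  Equiv.ext fun x => absurd x.2 (by omega)

set_option maxHeartbeats 1000000 in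
lemma erase_sum_zero {R : Type*} [CommRing R] (n : ℕ) (f g : Fin (2 * n) → R) :
    ∑ σ ∈ (pfMatchings n).erase 1,
      ((Equiv.Perm.sign σ : ℤ) : R) *
        ∏ i : Fin n, f (σ ⟨2 * i.1, by have := i.2; omega⟩) *
          g (σ ⟨2 * i.1 + 1, by have := i.2; omega⟩) = 0 := by
  cases n with
  | zero =>
    have : (pfMatchings 0).erase 1 = ∅ := by
      rw [Finset.eq_empty_iff_forall_notMem]
      intro σ hσ
      exact (Finset.ne_of_mem_erase hσ) (perm_fin_zero_eq_one σ)
    rw [this, Finset.sum_empty]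
  | succ m =>
    apply Finset.sum_involution (fun σ _ => invp σ)
    · intro σ ha
      rw [Finset.mem_erase] at ha
      have h := exists_Q ha.2 ha.1
      rw [sign_invp h, prod_invp f g h]
      push_cast
      ring
    · intro σ ha _
      rw [Finset.mem_erase] at ha
      exact invp_ne_self (exists_Q ha.2 ha.1)
    · intro σ ha
      rw [Finset.mem_erase] at ha ⊢
      have h := exists_Q ha.2 ha.1
      exact ⟨invp_ne_one ha.2 h, invp_mem ha.2 h⟩
    · intro σ ha
      rw [Finset.mem_erase] at ha
      exact invp_invp ha.2 (exists_Q ha.2 ha.1)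

set_option maxHeartbeats 1000000 in
lemma pf_rank_one {R : Type*} [CommRing R] (n : ℕ) (f g : Fin (2 * n) → R) :
    pf (Matrix.of fun i j : Fin (2 * n) =>
        if i < j then f i * g j else if j < i then -(f j * g i) else 0) =
    ∏ i : Fin n, f ⟨2 * i.1, by have := i.2; omega⟩ * g ⟨2 * i.1 + 1, by have := i.2; omega⟩ := by
  unfold pf
  have hconv : ∀ σ ∈ pfMatchings n,
      ((Equiv.Perm.sign σ : ℤ) : R) *
        ∏ i : Fin n,
          (Matrix.of fun i j : Fin (2 * n) =>
            if i < j then f i * g j else if j < i then -(f j * g i) else 0)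
            (σ ⟨2 * i.1, by have := i.2; omega⟩) (σ ⟨2 * i.1 + 1, by have := i.2; omega⟩) =
      ((Equiv.Perm.sign σ : ℤ) : R) *
        ∏ i : Fin n, f (σ ⟨2 * i.1, by have := i.2; omega⟩) *
          g (σ ⟨2 * i.1 + 1, by have := i.2; omega⟩) := by
    intro σ hσ
    congr 1
    apply Finset.prod_congr rfl
    intro i _
    rw [Matrix.of_apply, if_pos (((mem_pfMatchings σ).1 hσ).1 i)]
  rw [Finset.sum_congr rfl hconv,
    ← Finset.add_sum_erase _ _ (one_mem_pfMatchings n), erase_sum_zero, add_zero]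
  simp

end PfAux

namespace PfAux

lemma sum_aux (n : ℕ) : ∑ i : Fin n, (n - 1 - i.1) = n.choose 2 := by
  have h1 : ∑ i ∈ Finset.range n, (n - 1 - i) = ∑ i ∈ Finset.range n, i :=
    Finset.sum_range_reflect (fun j => j) n
  have h2 := Finset.sum_range_id_mul_two n
  rw [Fin.sum_univ_eq_sum_range (fun i => n - 1 - i) n, h1, Nat.choose_two_right]
  omega

end PfAux

set_option maxHeartbeats 1000000 in
/-- For a partition `λ` with at most `2n` parts (0-indexed here, so
`λ` in the paper has parts `lam 0 ≥ lam 1 ≥ ⋯`), letting `l i = lam i + 2n - 1 - i`,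
the Pfaffian of the skew-symmetric matrix with entries
`α i j = a^⌈(l i − 1)/2⌉ b^⌊(l i − 1)/2⌋ c^⌈l j /2⌉ d^⌊l j /2⌋` (for `i < j`)
equals `(abcd)^(n(n−1)/2) · ω(λ)`.
Note `⌈(m−1)/2⌉ = m/2` (for `m ≥ 1`, which holds for `l i` with `i < 2n - 1`),
`⌊(m−1)/2⌋ = (m−1)/2`, `⌈m/2⌉ = (m+1)/2`, `⌊m/2⌋ = m/2` with ℕ-division. -/
theorem pf_weight (R : Type*) [CommRing R] (a b c d : R) (n : ℕ)
    (lam : Fin (2 * n) → ℕ) (hlam : Antitone lam)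
    (l : Fin (2 * n) → ℕ) (hl : ∀ i, l i = lam i + (2 * n - 1 - i.1)) :
    pf (Matrix.of fun i j : Fin (2 * n) =>
        if i < j then
          a ^ (l i / 2) * b ^ ((l i - 1) / 2) * c ^ ((l j + 1) / 2) * d ^ (l j / 2)
        else if j < i then
          -(a ^ (l j / 2) * b ^ ((l j - 1) / 2) * c ^ ((l i + 1) / 2) * d ^ (l i / 2))
        else 0) =
      (a * b * c * d) ^ n.choose 2 *
        (a ^ (∑ i : Fin n, (lam ⟨2 * i.1, by have := i.2; omega⟩ + 1) / 2) *
         b ^ (∑ i : Fin n, lam ⟨2 * i.1, by have := i.2; omega⟩ / 2) *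
         c ^ (∑ i : Fin n, (lam ⟨2 * i.1 + 1, by have := i.2; omega⟩ + 1) / 2) *
         d ^ (∑ i : Fin n, lam ⟨2 * i.1 + 1, by have := i.2; omega⟩ / 2)) := by
  have hM : (Matrix.of fun i j : Fin (2 * n) =>
        if i < j then
          a ^ (l i / 2) * b ^ ((l i - 1) / 2) * c ^ ((l j + 1) / 2) * d ^ (l j / 2)
        else if j < i then
          -(a ^ (l j / 2) * b ^ ((l j - 1) / 2) * c ^ ((l i + 1) / 2) * d ^ (l i / 2))
        else 0) =
      Matrix.of fun i j : Fin (2 * n) =>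
        if i < j then (a ^ (l i / 2) * b ^ ((l i - 1) / 2)) * (c ^ ((l j + 1) / 2) * d ^ (l j / 2))
        else if j < i then
          -((a ^ (l j / 2) * b ^ ((l j - 1) / 2)) * (c ^ ((l i + 1) / 2) * d ^ (l i / 2)))
        else 0 := by
    funext i j
    simp only [Matrix.of_apply]
    split_ifs <;> ring
  rw [hM, PfAux.pf_rank_one n (fun i => a ^ (l i / 2) * b ^ ((l i - 1) / 2))
    (fun j => c ^ ((l j + 1) / 2) * d ^ (l j / 2))]
  have hterm : ∀ i : Fin n,
      (a ^ (l ⟨2 * i.1, by have := i.2; omega⟩ / 2) *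
        b ^ ((l ⟨2 * i.1, by have := i.2; omega⟩ - 1) / 2)) *
      (c ^ ((l ⟨2 * i.1 + 1, by have := i.2; omega⟩ + 1) / 2) *
        d ^ (l ⟨2 * i.1 + 1, by have := i.2; omega⟩ / 2)) =
      (a * b * c * d) ^ (n - 1 - i.1) *
        (a ^ ((lam ⟨2 * i.1, by have := i.2; omega⟩ + 1) / 2) *
         b ^ (lam ⟨2 * i.1, by have := i.2; omega⟩ / 2) *
         c ^ ((lam ⟨2 * i.1 + 1, by have := i.2; omega⟩ + 1) / 2) *
         d ^ (lam ⟨2 * i.1 + 1, by have := i.2; omega⟩ / 2)) := by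
    intro i
    have hi2 := i.2
    rw [hl ⟨2 * i.1, by omega⟩, hl ⟨2 * i.1 + 1, by omega⟩]
    simp only
    set x := lam ⟨2 * i.1, by omega⟩ with hx
    set y := lam ⟨2 * i.1 + 1, by omega⟩ with hy
    have e1 : (x + (2 * n - 1 - 2 * i.1)) / 2 = (x + 1) / 2 + (n - 1 - i.1) := by omega
    have e2 : (x + (2 * n - 1 - 2 * i.1) - 1) / 2 = x / 2 + (n - 1 - i.1) := by omega
    have e3 : (y + (2 * n - 1 - (2 * i.1 + 1)) + 1) / 2 = (y + 1) / 2 + (n - 1 - i.1) := by omega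
    have e4 : (y + (2 * n - 1 - (2 * i.1 + 1))) / 2 = y / 2 + (n - 1 - i.1) := by omega
    rw [e1, e2, e3, e4, pow_add, pow_add, pow_add, pow_add]
    ring
  rw [Finset.prod_congr rfl (fun i _ => hterm i), Finset.prod_mul_distrib,
    Finset.prod_pow_eq_pow_sum, PfAux.sum_aux, Finset.prod_mul_distrib,
    Finset.prod_mul_distrib, Finset.prod_mul_distrib, Finset.prod_pow_eq_pow_sum,
    Finset.prod_pow_eq_pow_sum, Finset.prod_pow_eq_pow_sum, Finset.prod_pow_eq_pow_sum]
end

section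
/- For formal variables a,b,c,d,x_i,x_j, the sum Σ_{r≥s≥0} a^r b^r c^s d^s (x_i^{2r+1} x_j^{2s} − x_j^{2r+1} x_i^{2s}) equals (x_i − x_j)(1 + a b x_i x_j) / ((1 − a b x_i^2)(1 − a b x_j^2)(1 − a b c d x_i^2 x_j^2)) as formal power series. -/
open MvPowerSeries

lemma key_telescope {R : Type*} [CommRing R] (q t x y : R) (n : ℕ) :
    (1 - q*x^2) * (1 - q*y^2) * (1 - q*t*x^2*y^2) *
      (∑ r ∈ Finset.range n, q^r *
        (x^(2*r+1) * (∑ s ∈ Finset.range (r+1), (t*y^2)^s)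
         - y^(2*r+1) * (∑ s ∈ Finset.range (r+1), (t*x^2)^s)))
    = (x - y)*(1 + q*x*y)
      - ((q*t*x^2*y^2)^n * ((x - y)*(1 + q*x*y))
         + (1 - q*y^2)*(1 - q*t*x^2*y^2) * x * (q*x^2)^n * (∑ s ∈ Finset.range n, (t*y^2)^s)
         - (1 - q*x^2)*(1 - q*t*x^2*y^2) * y * (q*y^2)^n * (∑ s ∈ Finset.range n, (t*x^2)^s)) := by
  induction n with
  | zero => simp
  | succ n ih =>
    rw [Finset.sum_range_succ, Finset.sum_range_succ ((t*y^2)^·),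
      Finset.sum_range_succ ((t*x^2)^·), mul_add, ih]
    ring

lemma triangle_sum {M : Type*} [AddCommMonoid M] (n : ℕ) (f : ℕ → ℕ → M) :
    ∑ p ∈ (Finset.range n ×ˢ Finset.range n).filter (fun p => p.2 ≤ p.1), f p.1 p.2
      = ∑ r ∈ Finset.range n, ∑ s ∈ Finset.range (r+1), f r s := by
  rw [Finset.sum_filter, Finset.sum_product]
  refine Finset.sum_congr rfl fun r hr => ?_
  rw [← Finset.sum_filter]
  refine Finset.sum_congr ?_ fun _ _ => rfl
  ext s
  simp only [Finset.mem_filter, Finset.mem_range] at *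
  omega

-- vanishing of coefficients of X 0 ^ n * W when n > m 0
lemma coeff_X0_pow_mul_eq_zero (m : Fin 6 →₀ ℕ) (n : ℕ) (hn : m 0 < n)
    (W : MvPowerSeries (Fin 6) ℚ) :
    coeff m ((X 0 : MvPowerSeries (Fin 6) ℚ) ^ n * W) = 0 := by
  rw [X_pow_eq, coeff_monomial_mul, if_neg]
  intro h
  exact absurd (Finsupp.single_le_iff.mp h) (by omega)

/-- with `a,b,c,d,x_i,x_j` formal variables (the six generators of a
multivariate formal power series ring over ℚ), we have
`Σ_{r≥s≥0} a^r b^r c^s d^s (x_i^{2r+1} x_j^{2s} − x_j^{2r+1} x_i^{2s})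
  = (x_i − x_j)(1 + a b x_i x_j) / ((1 − a b x_i²)(1 − a b x_j²)(1 − a b c d x_i² x_j²))`.
Since the pi topology is unavailable, the identity is stated in the (equivalent)
denominator-cleared, coefficientwise form: for every monomial `m`, the (finitely
supported) sum over pairs `r ≥ s ≥ 0` of the `m`-th coefficient of
`(denominator) · (term r s)` equals the `m`-th coefficient of the numerator. -/
theorem stanley_sum_case_i
    (a b c d xi xj : MvPowerSeries (Fin 6) ℚ)
    (ha : a = X 0) (hb : b = X 1) (hc : c = X 2) (hd : d = X 3)
    (hxi : xi = X 4) (hxj : xj = X 5) :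
    ∀ m : Fin 6 →₀ ℕ,
      (∑ᶠ p : {q : ℕ × ℕ // q.2 ≤ q.1},
        coeff m
          ((1 - a * b * xi ^ 2) * (1 - a * b * xj ^ 2) * (1 - a * b * c * d * xi ^ 2 * xj ^ 2) *
            (a ^ p.1.1 * b ^ p.1.1 * c ^ p.1.2 * d ^ p.1.2 *
              (xi ^ (2 * p.1.1 + 1) * xj ^ (2 * p.1.2) -
               xj ^ (2 * p.1.1 + 1) * xi ^ (2 * p.1.2))))) =
      coeff m ((xi - xj) * (1 + a * b * xi * xj)) := by
  subst ha hb hc hd hxi hxj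
  intro m
  classical
  set n := m 0 + 1 with hn
  set A : MvPowerSeries (Fin 6) ℚ := X 0
  set B : MvPowerSeries (Fin 6) ℚ := X 1
  set C : MvPowerSeries (Fin 6) ℚ := X 2
  set D : MvPowerSeries (Fin 6) ℚ := X 3
  set x : MvPowerSeries (Fin 6) ℚ := X 4
  set y : MvPowerSeries (Fin 6) ℚ := X 5
  set Den : MvPowerSeries (Fin 6) ℚ :=
    (1 - A * B * x ^ 2) * (1 - A * B * y ^ 2) * (1 - A * B * C * D * x ^ 2 * y ^ 2) with hDen
  set T : ℕ → ℕ → MvPowerSeries (Fin 6) ℚ := fun r s =>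
    A ^ r * B ^ r * C ^ s * D ^ s *
      (x ^ (2 * r + 1) * y ^ (2 * s) - y ^ (2 * r + 1) * x ^ (2 * s)) with hT
  -- coefficient vanishing for r ≥ n
  have hvanish : ∀ r s : ℕ, n ≤ r → coeff m (Den * T r s) = 0 := by
    intro r s hr
    have hfac : Den * T r s = (X 0 : MvPowerSeries (Fin 6) ℚ) ^ r *
        (Den * (B ^ r * C ^ s * D ^ s *
          (x ^ (2 * r + 1) * y ^ (2 * s) - y ^ (2 * r + 1) * x ^ (2 * s)))) := by
      rw [hT, hDen]; ring
    rw [hfac]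
    exact coeff_X0_pow_mul_eq_zero m r (by omega) _
  -- replace the finsum by a finite sum
  have hsupp : (Function.support fun p : {q : ℕ × ℕ // q.2 ≤ q.1} =>
      coeff m (Den * T p.1.1 p.1.2)) ⊆
      ((Finset.range n ×ˢ Finset.range n).subtype (fun q => q.2 ≤ q.1) : Finset _) := by
    intro p hp
    simp only [Function.mem_support] at hp
    simp only [Set.mem_setOf_eq, Finset.mem_coe, Finset.mem_subtype,
      Finset.mem_product, Finset.mem_range]
    by_contra h
    have hr : n ≤ p.1.1 := by
      rcases p with ⟨⟨r, s⟩, hle⟩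
      simp only [not_and_or, not_lt] at h
      simp only at hle ⊢
      omega
    exact hp (hvanish _ _ hr)
  rw [finsum_eq_sum_of_support_subset _ hsupp, Finset.sum_subtype_eq_sum_filter (fun q : ℕ × ℕ => coeff m (Den * T q.1 q.2)),
    triangle_sum n (fun r s => coeff m (Den * T r s))]
  -- move coeff out
  have hms : ∀ r : ℕ, ∑ s ∈ Finset.range (r+1), coeff m (Den * T r s)
      = coeff m (∑ s ∈ Finset.range (r+1), Den * T r s) := fun r =>
    (map_sum (coeff m) _ _).symm
  simp only [hms]
  rw [← map_sum (coeff m)]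
  -- rows in geometric form
  have hrow : ∀ r : ℕ, ∑ s ∈ Finset.range (r+1), Den * T r s
      = Den * ((A*B) ^ r * (x ^ (2*r+1) * (∑ s ∈ Finset.range (r+1), (C*D*y^2) ^ s)
          - y ^ (2*r+1) * (∑ s ∈ Finset.range (r+1), (C*D*x^2) ^ s))) := by
    intro r
    calc ∑ s ∈ Finset.range (r+1), Den * T r s
        = ∑ s ∈ Finset.range (r+1),
            Den * ((A*B)^r * (x^(2*r+1)*(C*D*y^2)^s - y^(2*r+1)*(C*D*x^2)^s)) :=
          Finset.sum_congr rfl fun s _ => by rw [hT]; ring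
      _ = _ := by
          simp only [mul_sub, Finset.mul_sum, Finset.sum_sub_distrib]
  simp only [hrow]
  have hDen' : Den = (1 - (A*B)*x^2) * (1 - (A*B)*y^2) * (1 - (A*B)*(C*D)*x^2*y^2) := by
    rw [hDen]; ring
  rw [← Finset.mul_sum, hDen', key_telescope (A*B) (C*D) x y n]
  rw [map_sub]
  have hE : ((A*B)*(C*D)*x^2*y^2)^n * ((x - y)*(1 + (A*B)*x*y))
         + (1 - (A*B)*y^2)*(1 - (A*B)*(C*D)*x^2*y^2) * x * ((A*B)*x^2)^n *
            (∑ s ∈ Finset.range n, ((C*D)*y^2)^s)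
         - (1 - (A*B)*x^2)*(1 - (A*B)*(C*D)*x^2*y^2) * y * ((A*B)*y^2)^n *
            (∑ s ∈ Finset.range n, ((C*D)*x^2)^s)
      = (X 0 : MvPowerSeries (Fin 6) ℚ) ^ n *
        ((B*(C*D)*x^2*y^2)^n * ((x - y)*(1 + (A*B)*x*y))
         + (1 - (A*B)*y^2)*(1 - (A*B)*(C*D)*x^2*y^2) * x * (B*x^2)^n *
            (∑ s ∈ Finset.range n, ((C*D)*y^2)^s)
         - (1 - (A*B)*x^2)*(1 - (A*B)*(C*D)*x^2*y^2) * y * (B*y^2)^n *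
            (∑ s ∈ Finset.range n, ((C*D)*x^2)^s)) := by
    rw [show A = X (0 : Fin 6) from rfl]; ring
  rw [hE, coeff_X0_pow_mul_eq_zero m n (by omega), sub_zero]
end

section
/- For formal variables a,b,c,d,x_i,x_j, Σ_{k>l≥0} a^{⌈(k−1)/2⌉} b^{⌊(k−1)/2⌋} c^{⌈l/2⌉} d^{⌊l/2⌋} (x_i^k x_j^l − x_j^k x_i^l) equals (x_i − x_j)·(1 + a b x_i x_j + a(x_i + x_j) + a b c x_i x_j(x_i + x_j) + a c x_i x_j(1 + a b x_i x_j)) divided by (1 − a b x_i^2)(1 − a b x_j^2)(1 − a b c d x_i^2 x_j^2), as formal power series. -/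
open Finset

open Finset

section StanleyAux

variable {R : Type*} [CommRing R]

/-- `A k = a^(k/2) b^((k-1)/2)` (ℕ-division). -/
def stAa (a b : R) (k : ℕ) : R := a ^ (k / 2) * b ^ ((k - 1) / 2)

/-- `C l = c^((l+1)/2) d^(l/2)` (ℕ-division). -/
def stCc (c d : R) (l : ℕ) : R := c ^ ((l + 1) / 2) * d ^ (l / 2)

/-- bottom boundary term of the inner geometric telescoping. -/
def stBot (a b c d x y : R) (l : ℕ) : R :=
  stCc c d l * ((1 - a * b * y ^ 2) * y ^ l *
      (stAa a b (l + 1) * x ^ (l + 1) + stAa a b (l + 2) * x ^ (l + 2)) -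
    (1 - a * b * x ^ 2) * x ^ l *
      (stAa a b (l + 1) * y ^ (l + 1) + stAa a b (l + 2) * y ^ (l + 2)))

/-- top boundary term of the inner geometric telescoping. -/
def stTop (a b c d x y : R) (K l : ℕ) : R :=
  stCc c d l * ((1 - a * b * y ^ 2) * y ^ l *
      (stAa a b (K + 1) * x ^ (K + 1) + stAa a b (K + 2) * x ^ (K + 2)) -
    (1 - a * b * x ^ 2) * x ^ l *
      (stAa a b (K + 1) * y ^ (K + 1) + stAa a b (K + 2) * y ^ (K + 2)))

theorem stAa_step (a b : R) (k : ℕ) : stAa a b (k + 3) = a * b * stAa a b (k + 1) := by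
  unfold stAa
  rw [show (k + 3) / 2 = (k + 1) / 2 + 1 by omega,
    show (k + 3 - 1) / 2 = (k + 1 - 1) / 2 + 1 by omega, pow_succ, pow_succ]
  ring

theorem stCc_step (c d : R) (l : ℕ) : stCc c d (l + 2) = c * d * stCc c d l := by
  unfold stCc
  rw [show (l + 2 + 1) / 2 = (l + 1) / 2 + 1 by omega,
    show (l + 2) / 2 = l / 2 + 1 by omega, pow_succ, pow_succ]
  ring

theorem st_geom (a b x : R) (l : ℕ) : ∀ K, l ≤ K →
    (1 - a * b * x ^ 2) * (∑ k ∈ Ico (l + 1) (K + 1), stAa a b k * x ^ k) =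
      stAa a b (l + 1) * x ^ (l + 1) + stAa a b (l + 2) * x ^ (l + 2) -
      stAa a b (K + 1) * x ^ (K + 1) - stAa a b (K + 2) * x ^ (K + 2) := by
  intro K
  induction K with
  | zero =>
    intro h
    interval_cases l
    simp [Ico_self]
  | succ K ih =>
    intro h
    rcases Nat.lt_or_ge K l with h2 | h2
    · -- l = K + 1, empty sum
      have : l = K + 1 := by omega
      subst this
      simp [Ico_self]
    · rw [sum_Ico_succ_top (by omega : l + 1 ≤ K + 1), mul_add, ih h2,
        show K + 1 + 1 = K + 2 from rfl, show K + 1 + 2 = K + 3 from rfl,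
        stAa_step a b K]
      ring

theorem st_tsum (a b c d x y : R) (l K : ℕ) (h : l ≤ K) :
    (1 - a * b * x ^ 2) * (1 - a * b * y ^ 2) *
      (∑ k ∈ Ico (l + 1) (K + 1),
        stAa a b k * stCc c d l * (x ^ k * y ^ l - y ^ k * x ^ l)) =
    stBot a b c d x y l - stTop a b c d x y K l := by
  have hs : (∑ k ∈ Ico (l + 1) (K + 1),
        stAa a b k * stCc c d l * (x ^ k * y ^ l - y ^ k * x ^ l)) =
      stCc c d l * y ^ l * (∑ k ∈ Ico (l + 1) (K + 1), stAa a b k * x ^ k) -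
      stCc c d l * x ^ l * (∑ k ∈ Ico (l + 1) (K + 1), stAa a b k * y ^ k) := by
    rw [mul_sum, mul_sum, ← sum_sub_distrib]
    exact sum_congr rfl fun k _ => by ring
  rw [hs]
  have gx := st_geom a b x l K h
  have gy := st_geom a b y l K h
  unfold stBot stTop
  linear_combination ((1 - a * b * y ^ 2) * stCc c d l * y ^ l) * gx -
    ((1 - a * b * x ^ 2) * stCc c d l * x ^ l) * gy

theorem stBot_step (a b c d x y : R) (l : ℕ) :
    stBot a b c d x y (l + 2) = a * b * c * d * x ^ 2 * y ^ 2 * stBot a b c d x y l := by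
  unfold stBot
  rw [show l + 2 + 1 = l + 3 from rfl, show l + 2 + 2 = l + 4 from rfl,
    stCc_step c d l, stAa_step a b l, show l + 4 = l + 1 + 3 from rfl,
    stAa_step a b (l + 1), show l + 1 + 1 = l + 2 from rfl]
  ring

theorem st_botsum (a b c d x y : R) : ∀ L,
    (1 - a * b * c * d * x ^ 2 * y ^ 2) * (∑ l ∈ range (L + 1), stBot a b c d x y l) =
      stBot a b c d x y 0 + stBot a b c d x y 1 -
      stBot a b c d x y (L + 1) - stBot a b c d x y (L + 2) := by
  intro L
  induction L with
  | zero =>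
    rw [sum_range_one]
    linear_combination stBot_step a b c d x y 0
  | succ L ih =>
    rw [sum_range_succ, mul_add, ih, show L + 1 + 1 = L + 2 from rfl,
      show L + 1 + 2 = L + 3 from rfl, show L + 3 = L + 1 + 2 from rfl,
      stBot_step a b c d x y (L + 1)]
    ring

theorem st_master (a b c d x y : R) (K : ℕ) (hK : 1 ≤ K) :
    (1 - a * b * x ^ 2) * (1 - a * b * y ^ 2) * (1 - a * b * c * d * x ^ 2 * y ^ 2) *
      (∑ l ∈ range K, ∑ k ∈ Ico (l + 1) (K + 1),
        stAa a b k * stCc c d l * (x ^ k * y ^ l - y ^ k * x ^ l)) =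
    stBot a b c d x y 0 + stBot a b c d x y 1 -
      stBot a b c d x y K - stBot a b c d x y (K + 1) -
      (1 - a * b * c * d * x ^ 2 * y ^ 2) * ∑ l ∈ range K, stTop a b c d x y K l := by
  obtain ⟨L, rfl⟩ : ∃ L, K = L + 1 := ⟨K - 1, by omega⟩
  have e : (1 - a * b * x ^ 2) * (1 - a * b * y ^ 2) *
      (∑ l ∈ range (L + 1), ∑ k ∈ Ico (l + 1) (L + 1 + 1),
        stAa a b k * stCc c d l * (x ^ k * y ^ l - y ^ k * x ^ l)) =
      ∑ l ∈ range (L + 1), (stBot a b c d x y l - stTop a b c d x y (L + 1) l) := by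
    rw [mul_sum]
    exact sum_congr rfl fun l hl =>
      st_tsum a b c d x y l (L + 1) (by have := mem_range.mp hl; omega)
  have e2 := st_botsum a b c d x y L
  rw [sum_sub_distrib] at e
  linear_combination (1 - a * b * c * d * x ^ 2 * y ^ 2) * e + e2

theorem stBot_shape (a b c d x y : R) (l : ℕ) :
    stBot a b c d x y l =
      (stCc c d l * (1 - a * b * y ^ 2) * y ^ l *
        (stAa a b (l + 1) + stAa a b (l + 2) * x)) * x ^ (l + 1) -
      (stCc c d l * (1 - a * b * x ^ 2) * x ^ l *
        (stAa a b (l + 1) + stAa a b (l + 2) * y)) * y ^ (l + 1) := by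
  unfold stBot
  ring

theorem stTop_shape (a b c d x y : R) (K l : ℕ) :
    (1 - a * b * c * d * x ^ 2 * y ^ 2) * stTop a b c d x y K l =
      ((1 - a * b * c * d * x ^ 2 * y ^ 2) * stCc c d l * (1 - a * b * y ^ 2) * y ^ l *
        (stAa a b (K + 1) + stAa a b (K + 2) * x)) * x ^ (K + 1) -
      ((1 - a * b * c * d * x ^ 2 * y ^ 2) * stCc c d l * (1 - a * b * x ^ 2) * x ^ l *
        (stAa a b (K + 1) + stAa a b (K + 2) * y)) * y ^ (K + 1) := by
  unfold stTop
  ring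

end StanleyAux

section Exch
theorem st_exch {M : Type*} [AddCommMonoid M] (g : ℕ → ℕ → M) (K : ℕ) :
    ∑ q ∈ (range (K + 1) ×ˢ range (K + 1)).filter (fun q => q.2 < q.1), g q.1 q.2 =
      ∑ l ∈ range K, ∑ k ∈ Ico (l + 1) (K + 1), g k l := by
  rw [← Finset.sum_sigma (range K) (fun l => Ico (l + 1) (K + 1)) (fun p => g p.2 p.1)]
  refine Finset.sum_nbij' (fun q => ⟨q.2, q.1⟩) (fun p => (p.2, p.1)) ?_ ?_ ?_ ?_ ?_
  · intro q hq
    simp only [mem_filter, mem_product, mem_range] at hq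
    simp only [mem_sigma, mem_range, mem_Ico]
    omega
  · intro p hp
    simp only [mem_sigma, mem_range, mem_Ico] at hp
    simp only [mem_filter, mem_product, mem_range]
    omega
  · intro q _; rfl
  · intro p _; rfl
  · intro q _; rfl
end Exch

section Vanish
open MvPowerSeries
theorem st_vanish (m : Fin 6 →₀ ℕ) (s : Fin 6) (e : ℕ) (h : m s < e)
    (u : MvPowerSeries (Fin 6) ℚ) :
    coeff m (u * X s ^ e) = 0 := by
  rw [X_pow_eq, coeff_mul_monomial, if_neg]
  intro hle
  exact absurd (Finsupp.single_le_iff.mp hle) (by omega)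
end Vanish

open MvPowerSeries

/-- with `a,b,c,d,x_i,x_j` formal variables,
`Σ_{k>l≥0} a^{⌈(k−1)/2⌉} b^{⌊(k−1)/2⌋} c^{⌈l/2⌉} d^{⌊l/2⌋} (x_i^k x_j^l − x_j^k x_i^l)`
equals
`(x_i−x_j)(1 + a b x_i x_j + a(x_i+x_j) + a b c x_i x_j(x_i+x_j) + a c x_i x_j(1 + a b x_i x_j))`
divided by `(1 − a b x_i²)(1 − a b x_j²)(1 − a b c d x_i² x_j²)`.
With ℕ-division: for `k ≥ 1`, `⌈(k−1)/2⌉ = k/2` and `⌊(k−1)/2⌋ = (k−1)/2`;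
`⌈l/2⌉ = (l+1)/2`, `⌊l/2⌋ = l/2`.
Stated in the equivalent denominator-cleared, coefficientwise form. -/
theorem stanley_sum_total
    (a b c d xi xj : MvPowerSeries (Fin 6) ℚ)
    (ha : a = X 0) (hb : b = X 1) (hc : c = X 2) (hd : d = X 3)
    (hxi : xi = X 4) (hxj : xj = X 5) :
    ∀ m : Fin 6 →₀ ℕ,
      (∑ᶠ p : {q : ℕ × ℕ // q.2 < q.1},
        coeff m
          ((1 - a * b * xi ^ 2) * (1 - a * b * xj ^ 2) * (1 - a * b * c * d * xi ^ 2 * xj ^ 2) *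
            (a ^ (p.1.1 / 2) * b ^ ((p.1.1 - 1) / 2) * c ^ ((p.1.2 + 1) / 2) * d ^ (p.1.2 / 2) *
              (xi ^ p.1.1 * xj ^ p.1.2 - xj ^ p.1.1 * xi ^ p.1.2)))) =
      coeff m ((xi - xj) *
        (1 + a * b * xi * xj + a * (xi + xj) + a * b * c * xi * xj * (xi + xj) +
          a * c * xi * xj * (1 + a * b * xi * xj))) := by
  subst hxi hxj
  intro m
  classical
  set K := max (m 4) (m 5) + 1 with hKdef
  have step1 : (∑ᶠ p : {q : ℕ × ℕ // q.2 < q.1},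
        coeff m
          ((1 - a * b * X 4 ^ 2) * (1 - a * b * X 5 ^ 2) *
              (1 - a * b * c * d * X 4 ^ 2 * X 5 ^ 2) *
            (a ^ (p.1.1 / 2) * b ^ ((p.1.1 - 1) / 2) * c ^ ((p.1.2 + 1) / 2) * d ^ (p.1.2 / 2) *
              (X 4 ^ p.1.1 * X 5 ^ p.1.2 - X 5 ^ p.1.1 * X 4 ^ p.1.2)))) =
      ∑ᶠ p : {q : ℕ × ℕ // q.2 < q.1},
        coeff m
          ((1 - a * b * X 4 ^ 2) * (1 - a * b * X 5 ^ 2) *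
              (1 - a * b * c * d * X 4 ^ 2 * X 5 ^ 2) *
            (stAa a b p.1.1 * stCc c d p.1.2 *
              (X 4 ^ p.1.1 * X 5 ^ p.1.2 - X 5 ^ p.1.1 * X 4 ^ p.1.2))) :=
    finsum_congr fun p => congrArg _ (by unfold stAa stCc; ring)
  rw [step1]
  have hzero : ∀ k l : ℕ, K < k →
      coeff m
        ((1 - a * b * X 4 ^ 2) * (1 - a * b * X 5 ^ 2) *
            (1 - a * b * c * d * X 4 ^ 2 * X 5 ^ 2) *
          (stAa a b k * stCc c d l * (X 4 ^ k * X 5 ^ l - X 5 ^ k * X 4 ^ l))) = 0 := by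
    intro k l hk
    have h1 : (1 - a * b * X 4 ^ 2) * (1 - a * b * X 5 ^ 2) *
            (1 - a * b * c * d * X 4 ^ 2 * X 5 ^ 2) *
          (stAa a b k * stCc c d l * (X (σ := Fin 6) (R := ℚ) 4 ^ k * X 5 ^ l - X 5 ^ k * X 4 ^ l)) =
        ((1 - a * b * X 4 ^ 2) * (1 - a * b * X 5 ^ 2) *
            (1 - a * b * c * d * X 4 ^ 2 * X 5 ^ 2) *
          (stAa a b k * stCc c d l) * X 5 ^ l) * X 4 ^ k -
        ((1 - a * b * X 4 ^ 2) * (1 - a * b * X 5 ^ 2) *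
            (1 - a * b * c * d * X 4 ^ 2 * X 5 ^ 2) *
          (stAa a b k * stCc c d l) * X 4 ^ l) * X 5 ^ k := by ring
    rw [h1, map_sub, st_vanish m 4 k (by omega), st_vanish m 5 k (by omega), sub_zero]
  have hsupp : Function.support (fun p : {q : ℕ × ℕ // q.2 < q.1} =>
      coeff m
        ((1 - a * b * X 4 ^ 2) * (1 - a * b * X 5 ^ 2) *
            (1 - a * b * c * d * X 4 ^ 2 * X 5 ^ 2) *
          (stAa a b p.1.1 * stCc c d p.1.2 *
            (X 4 ^ p.1.1 * X 5 ^ p.1.2 - X 5 ^ p.1.1 * X 4 ^ p.1.2)))) ⊆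
      ↑((range (K + 1) ×ˢ range (K + 1)).subtype (fun q => q.2 < q.1)) := by
    intro p hp
    simp only [Function.mem_support] at hp
    have hk : p.1.1 ≤ K := by
      by_contra hk
      exact hp (hzero _ _ (by omega))
    have hl := p.2
    simp only [Finset.mem_coe, Finset.mem_subtype, mem_product, mem_range]
    omega
  rw [finsum_eq_sum_of_support_subset _ hsupp]
  rw [Finset.sum_subtype_eq_sum_filter (fun q : ℕ × ℕ =>
      coeff m
        ((1 - a * b * X 4 ^ 2) * (1 - a * b * X 5 ^ 2) *
            (1 - a * b * c * d * X 4 ^ 2 * X 5 ^ 2) *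
          (stAa a b q.1 * stCc c d q.2 *
            (X 4 ^ q.1 * X 5 ^ q.2 - X 5 ^ q.1 * X 4 ^ q.2))))]
  rw [st_exch (fun k l =>
      coeff m
        ((1 - a * b * X 4 ^ 2) * (1 - a * b * X 5 ^ 2) *
            (1 - a * b * c * d * X 4 ^ 2 * X 5 ^ 2) *
          (stAa a b k * stCc c d l *
            (X 4 ^ k * X 5 ^ l - X 5 ^ k * X 4 ^ l)))) K]
  have hmul : (∑ l ∈ range K, ∑ k ∈ Ico (l + 1) (K + 1),
      coeff m
        ((1 - a * b * X 4 ^ 2) * (1 - a * b * X 5 ^ 2) *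
            (1 - a * b * c * d * X 4 ^ 2 * X 5 ^ 2) *
          (stAa a b k * stCc c d l * (X 4 ^ k * X 5 ^ l - X 5 ^ k * X 4 ^ l)))) =
      coeff m
        ((1 - a * b * X 4 ^ 2) * (1 - a * b * X 5 ^ 2) *
            (1 - a * b * c * d * X 4 ^ 2 * X 5 ^ 2) *
          ∑ l ∈ range K, ∑ k ∈ Ico (l + 1) (K + 1),
            stAa a b k * stCc c d l * (X 4 ^ k * X 5 ^ l - X 5 ^ k * X 4 ^ l)) := by
    simp_rw [Finset.mul_sum, map_sum]
  rw [hmul, st_master a b c d (X 4) (X 5) K (by omega)]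
  have z1 : coeff m (stBot a b c d (X (σ := Fin 6) (R := ℚ) 4) (X 5) K) = 0 := by
    rw [stBot_shape, map_sub, st_vanish m 4 (K + 1) (by omega),
      st_vanish m 5 (K + 1) (by omega), sub_zero]
  have z2 : coeff m (stBot a b c d (X (σ := Fin 6) (R := ℚ) 4) (X 5) (K + 1)) = 0 := by
    rw [stBot_shape, map_sub, st_vanish m 4 (K + 1 + 1) (by omega),
      st_vanish m 5 (K + 1 + 1) (by omega), sub_zero]
  have z3 : coeff m ((1 - a * b * c * d * X 4 ^ 2 * X 5 ^ 2) *
      ∑ l ∈ range K, stTop a b c d (X (σ := Fin 6) (R := ℚ) 4) (X 5) K l) = 0 := by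
    rw [Finset.mul_sum, map_sum]
    refine Finset.sum_eq_zero fun l _ => ?_
    rw [stTop_shape, map_sub, st_vanish m 4 (K + 1) (by omega),
      st_vanish m 5 (K + 1) (by omega), sub_zero]
  simp only [map_sub, z1, z2, z3, sub_zero]
  congr 1
  unfold stBot stAa stCc
  norm_num
  ring
end

section
/- Let n ≥ 1, let x_1,...,x_{2n} be variables and t an indeterminate. Then V^n(X, 1+tX^2; X, 1) = (−1)^{n(n−1)/2} t^{n(n−1)/2} Π_{1≤i<j≤2n}(x_i − x_j), where V^n(X, 1+tX^2; X, 1) is the determinant of the 2n×2n matrix whose (i,j) entry is x_i^{n−j+1}(1 + t x_i^2)^{j−1} for 1≤j≤n and x_i^{2n−j}(1 + t x_i^2)^{j−n−1} for n+1≤j≤2n. -/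
open Finset

/-- `V^n(X,Y;A,B)`: the determinant of the `2n × 2n` matrix whose `(i,j)` entry
(0-indexed columns) is `a_i x_i^{n−1−j} y_i^j` for `j < n` and
`b_i x_i^{2n−1−j} y_i^{j−n}` for `n ≤ j < 2n`. -/
def Vdet {R : Type*} [CommRing R] (n : ℕ) (x y a b : Fin (2 * n) → R) : R :=
  Matrix.det (Matrix.of fun i j : Fin (2 * n) =>
    if (j : ℕ) < n then a i * x i ^ (n - 1 - (j : ℕ)) * y i ^ (j : ℕ)
    else b i * x i ^ (2 * n - 1 - (j : ℕ)) * y i ^ ((j : ℕ) - n))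

namespace VdetSubsAux

open Equiv Equiv.Perm

lemma revPerm_succ_eq (m : ℕ) :
    (Fin.revPerm : Perm (Fin (m+1))) =
      (Equiv.Perm.decomposeFin.symm (0, (Fin.revPerm : Perm (Fin m)))) * finRotate (m+1) := by
  ext i
  rcases i.eq_castSucc_or_eq_last with ⟨j, rfl⟩ | rfl
  · simp only [Perm.mul_apply, finRotate_succ_apply, Fin.coeSucc_eq_succ,
      Equiv.Perm.decomposeFin_symm_apply_succ, Fin.revPerm_apply, Equiv.swap_self,
      Equiv.refl_apply]
    simp [Fin.rev, Fin.val_succ]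
    omega
  · simp [finRotate_last]

lemma sign_revPerm (m : ℕ) : sign (Fin.revPerm : Perm (Fin m)) = (-1)^(m.choose 2) := by
  induction m with
  | zero =>
    rw [Subsingleton.elim (Fin.revPerm : Perm (Fin 0)) 1]
    simp
  | succ m ih =>
    rw [revPerm_succ_eq, map_mul, sign_finRotate, Equiv.Perm.decomposeFin.symm_sign, ih,
      Nat.choose_succ_succ, Nat.choose_one_right, pow_add]
    simp [mul_comm]

def sigma0 (n : ℕ) : Perm (Fin (2*n)) :=
  ((finSumFinEquiv.trans (finCongr (two_mul n).symm)).permCongr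
     (Equiv.Perm.sumCongr 1 Fin.revPerm)) * Fin.revPerm

lemma sign_sigma0 (n : ℕ) :
    sign (sigma0 n) = (-1)^(n.choose 2) * (-1)^((2*n).choose 2) := by
  rw [sigma0, map_mul, sign_permCongr, Equiv.Perm.sign_sumCongr, sign_revPerm, sign_revPerm]
  simp

lemma sigma0_apply (n : ℕ) (i : Fin (2*n)) :
    (sigma0 n i : ℕ) = if (i : ℕ) < n then n + i else 2*n-1-(i:ℕ) := by
  have hi := i.2
  rcases Nat.lt_or_ge (i : ℕ) n with h | h
  · rw [if_pos h]
    have hrev : (Fin.revPerm i : Fin (2*n)) = ⟨n + (n - 1 - (i:ℕ)), by omega⟩ := by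
      simp [Fin.rev]; omega
    rw [sigma0, Perm.mul_apply, hrev]
    have : (finSumFinEquiv.trans (finCongr (two_mul n).symm)).symm
        (⟨n + (n - 1 - (i:ℕ)), by omega⟩ : Fin (2*n)) = Sum.inr ⟨n - 1 - (i:ℕ), by omega⟩ := by
      rw [Equiv.symm_apply_eq]
      simp [finSumFinEquiv_apply_right]
      try omega
    rw [Equiv.permCongr_apply, this]
    simp [Fin.rev]
    omega
  · rw [if_neg (by omega)]
    have hrev : (Fin.revPerm i : Fin (2*n)) = ⟨2*n - 1 - (i:ℕ), by omega⟩ := by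
      simp [Fin.rev]; omega
    rw [sigma0, Perm.mul_apply, hrev]
    have : (finSumFinEquiv.trans (finCongr (two_mul n).symm)).symm
        (⟨2*n - 1 - (i:ℕ), by omega⟩ : Fin (2*n)) = Sum.inl ⟨2*n - 1 - (i:ℕ), by omega⟩ := by
      rw [Equiv.symm_apply_eq]
      simp [finSumFinEquiv_apply_left]
      try omega
    rw [Equiv.permCongr_apply, this]
    simp

lemma sum_aux {R : Type*} [CommRing R] (N d c : ℕ) (h : d + 2*c < N) (H : ℕ → R) :
    (∑ k : Fin N, if d ≤ (k:ℕ) ∧ ((k:ℕ)-d) % 2 = 0 ∧ (k:ℕ) ≤ d + 2*c then H (k:ℕ) else 0)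
      = ∑ m ∈ Finset.range (c+1), H (d+2*m) := by
  set F : ℕ → R := fun k => if d ≤ k ∧ (k-d) % 2 = 0 ∧ k ≤ d + 2*c then H k else 0 with hF
  have e1 : (∑ k : Fin N, F (k:ℕ)) = ∑ k ∈ Finset.range N, F k :=
    Fin.sum_univ_eq_sum_range _ N
  have e2 : ∑ k ∈ Finset.range N, F k
      = ∑ k ∈ (Finset.range (c+1)).image (fun m => d + 2*m), F k := by
    refine (Finset.sum_subset ?_ ?_).symm
    · intro k hk
      simp only [Finset.mem_image, Finset.mem_range] at hk ⊢
      obtain ⟨m, hm, rfl⟩ := hk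
      omega
    · intro k hk hnk
      simp only [Finset.mem_image, Finset.mem_range] at hk hnk
      rw [hF]
      dsimp only
      rw [if_neg]
      intro ⟨h1, h2, h3⟩
      exact hnk ⟨(k-d)/2, by omega, by omega⟩
  have e3 : ∑ k ∈ (Finset.range (c+1)).image (fun m => d + 2*m), F k
      = ∑ m ∈ Finset.range (c+1), F (d + 2*m) :=
    Finset.sum_image (by intro a _ b _ hab; dsimp only at hab; omega)
  rw [e1, e2, e3]
  refine Finset.sum_congr rfl fun m hm => ?_
  simp only [Finset.mem_range] at hm
  rw [hF]
  dsimp only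
  rw [if_pos (by omega)]

def Cmat {R : Type*} [CommRing R] (n : ℕ) (t : R) : Matrix (Fin (2*n)) (Fin (2*n)) R :=
  Matrix.of fun k j =>
    if (j:ℕ) < n then
      (if n - (j:ℕ) ≤ (k:ℕ) ∧ ((k:ℕ) - (n - (j:ℕ))) % 2 = 0 ∧ (k:ℕ) ≤ (n - (j:ℕ)) + 2*(j:ℕ)
       then ((j:ℕ).choose (((k:ℕ) - (n - (j:ℕ)))/2) : R) * t^(((k:ℕ) - (n-(j:ℕ)))/2) else 0)
    else
      (if n - 1 - ((j:ℕ) - n) ≤ (k:ℕ) ∧ ((k:ℕ) - (n - 1 - ((j:ℕ)-n))) % 2 = 0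
          ∧ (k:ℕ) ≤ (n-1-((j:ℕ)-n)) + 2*((j:ℕ)-n)
       then (((j:ℕ)-n).choose (((k:ℕ) - (n-1-((j:ℕ)-n)))/2) : R) * t^(((k:ℕ) - (n-1-((j:ℕ)-n)))/2)
       else 0)

lemma factor {R : Type*} [CommRing R] (n : ℕ) (hn : 1 ≤ n) (x : Fin (2*n) → R) (t : R) :
    (Matrix.of fun i j : Fin (2*n) =>
      if (j : ℕ) < n then x i * x i ^ (n - 1 - (j : ℕ)) * (1 + t * x i ^ 2) ^ (j : ℕ)
      else (1:R) * x i ^ (2 * n - 1 - (j : ℕ)) * (1 + t * x i ^ 2) ^ ((j : ℕ) - n))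
    = (Matrix.vandermonde x) * Cmat n t := by
  ext i j
  rw [Matrix.mul_apply]
  simp only [Matrix.vandermonde, Cmat, Matrix.of_apply]
  by_cases hj : (j:ℕ) < n
  · rw [if_pos hj]
    have hj2 := j.2
    refine Eq.symm ?_
    calc (∑ k : Fin (2*n), x i ^ (k:ℕ) *
          (if (j:ℕ) < n then
            (if n - (j:ℕ) ≤ (k:ℕ) ∧ ((k:ℕ) - (n - (j:ℕ))) % 2 = 0 ∧ (k:ℕ) ≤ (n - (j:ℕ)) + 2*(j:ℕ)
             then ((j:ℕ).choose (((k:ℕ) - (n - (j:ℕ)))/2) : R) * t^(((k:ℕ) - (n-(j:ℕ)))/2) else 0)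
           else
            (if n - 1 - ((j:ℕ) - n) ≤ (k:ℕ) ∧ ((k:ℕ) - (n - 1 - ((j:ℕ)-n))) % 2 = 0
                ∧ (k:ℕ) ≤ (n-1-((j:ℕ)-n)) + 2*((j:ℕ)-n)
             then (((j:ℕ)-n).choose (((k:ℕ) - (n-1-((j:ℕ)-n)))/2) : R) * t^(((k:ℕ) - (n-1-((j:ℕ)-n)))/2)
             else 0)))
        = ∑ k : Fin (2*n),
            (if n - (j:ℕ) ≤ (k:ℕ) ∧ ((k:ℕ) - (n - (j:ℕ))) % 2 = 0 ∧ (k:ℕ) ≤ (n - (j:ℕ)) + 2*(j:ℕ)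
             then x i ^ (k:ℕ) * (((j:ℕ).choose (((k:ℕ) - (n - (j:ℕ)))/2) : R) * t^(((k:ℕ) - (n-(j:ℕ)))/2)) else 0) := by
          refine Finset.sum_congr rfl fun k _ => ?_
          rw [if_pos hj, mul_ite, mul_zero]
      _ = ∑ m ∈ Finset.range ((j:ℕ)+1),
            (fun k => x i ^ k * (((j:ℕ).choose ((k - (n - (j:ℕ)))/2) : R) * t^((k - (n-(j:ℕ)))/2))) ((n-(j:ℕ)) + 2*m) :=
          sum_aux (2*n) (n-(j:ℕ)) (j:ℕ) (by omega)
            (fun k => x i ^ k * (((j:ℕ).choose ((k - (n - (j:ℕ)))/2) : R) * t^((k - (n-(j:ℕ)))/2)))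
      _ = x i * x i ^ (n - 1 - (j : ℕ)) * (1 + t * x i ^ 2) ^ (j : ℕ) := by
          rw [add_comm (1:R) (t * x i ^2), add_pow, Finset.mul_sum]
          refine Finset.sum_congr rfl fun m hm => ?_
          dsimp only
          have hm' : ((n-(j:ℕ))+2*m) - (n - (j:ℕ)) = 2*m := by omega
          rw [hm']
          have h2 : (2*m)/2 = m := by omega
          rw [h2, pow_add, pow_mul]
          have h3 : n - (j:ℕ) = (n - 1 - (j:ℕ)) + 1 := by omega
          rw [h3, pow_succ, one_pow, mul_pow]
          ring
  · rw [if_neg hj]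
    have hj2 := j.2
    refine Eq.symm ?_
    calc (∑ k : Fin (2*n), x i ^ (k:ℕ) *
          (if (j:ℕ) < n then
            (if n - (j:ℕ) ≤ (k:ℕ) ∧ ((k:ℕ) - (n - (j:ℕ))) % 2 = 0 ∧ (k:ℕ) ≤ (n - (j:ℕ)) + 2*(j:ℕ)
             then ((j:ℕ).choose (((k:ℕ) - (n - (j:ℕ)))/2) : R) * t^(((k:ℕ) - (n-(j:ℕ)))/2) else 0)
           else
            (if n - 1 - ((j:ℕ) - n) ≤ (k:ℕ) ∧ ((k:ℕ) - (n - 1 - ((j:ℕ)-n))) % 2 = 0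
                ∧ (k:ℕ) ≤ (n-1-((j:ℕ)-n)) + 2*((j:ℕ)-n)
             then (((j:ℕ)-n).choose (((k:ℕ) - (n-1-((j:ℕ)-n)))/2) : R) * t^(((k:ℕ) - (n-1-((j:ℕ)-n)))/2)
             else 0)))
        = ∑ k : Fin (2*n),
            (if n - 1 - ((j:ℕ) - n) ≤ (k:ℕ) ∧ ((k:ℕ) - (n - 1 - ((j:ℕ)-n))) % 2 = 0
                ∧ (k:ℕ) ≤ (n-1-((j:ℕ)-n)) + 2*((j:ℕ)-n)
             then x i ^ (k:ℕ) * ((((j:ℕ)-n).choose (((k:ℕ) - (n-1-((j:ℕ)-n)))/2) : R) * t^(((k:ℕ) - (n-1-((j:ℕ)-n)))/2)) else 0) := by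
          refine Finset.sum_congr rfl fun k _ => ?_
          rw [if_neg hj, mul_ite, mul_zero]
      _ = ∑ m ∈ Finset.range (((j:ℕ)-n)+1),
            (fun k => x i ^ k * ((((j:ℕ)-n).choose ((k - (n-1-((j:ℕ)-n)))/2) : R) * t^((k - (n-1-((j:ℕ)-n)))/2))) ((n-1-((j:ℕ)-n)) + 2*m) :=
          sum_aux (2*n) (n-1-((j:ℕ)-n)) ((j:ℕ)-n) (by omega)
            (fun k => x i ^ k * ((((j:ℕ)-n).choose ((k - (n-1-((j:ℕ)-n)))/2) : R) * t^((k - (n-1-((j:ℕ)-n)))/2)))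
      _ = (1:R) * x i ^ (2 * n - 1 - (j : ℕ)) * (1 + t * x i ^ 2) ^ ((j : ℕ) - n) := by
          rw [add_comm (1:R) (t * x i ^2), add_pow, Finset.mul_sum]
          refine Finset.sum_congr rfl fun m hm => ?_
          dsimp only
          have hm' : ((n-1-((j:ℕ)-n))+2*m) - (n-1-((j:ℕ)-n)) = 2*m := by omega
          rw [hm']
          have h2 : (2*m)/2 = m := by omega
          rw [h2, pow_add, pow_mul]
          have h3 : n - 1 - ((j:ℕ)-n) = 2*n - 1 - (j:ℕ) := by omega
          rw [h3, one_pow, mul_pow]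
          ring

lemma sigma_unique (n : ℕ) (hn : 1 ≤ n) (σ : Perm (Fin (2*n)))
    (hb : ∀ j : Fin (2*n),
      ((j:ℕ) < n → (n - (j:ℕ) ≤ (σ j : ℕ) ∧ (σ j : ℕ) ≤ (n - (j:ℕ)) + 2*(j:ℕ))) ∧
      (n ≤ (j:ℕ) → (n - 1 - ((j:ℕ)-n) ≤ (σ j : ℕ) ∧ (σ j : ℕ) ≤ (n-1-((j:ℕ)-n)) + 2*((j:ℕ)-n)))) :
    σ = sigma0 n := by
  have inj : ∀ a b : Fin (2*n), (σ a : ℕ) = (σ b : ℕ) → (a:ℕ) = (b:ℕ) := by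
    intro a b h
    exact congrArg Fin.val (σ.injective (Fin.ext h))
  have key : ∀ j, ∀ hj : j < n,
      ((σ ⟨j, by omega⟩ : ℕ) = n + j ∧ (σ ⟨n+j, by omega⟩ : ℕ) = n-1-j) := by
    intro j
    induction j using Nat.strong_induction_on with
    | _ j IH =>
      intro hjn
      obtain ⟨hlo, hhi⟩ := (hb ⟨j, by omega⟩).1 hjn
      simp only [Fin.val_mk] at hlo hhi
      have h1 : (σ ⟨j, by omega⟩ : ℕ) = n + j := by
        by_contra hne
        rcases Nat.lt_or_ge (σ ⟨j, by omega⟩ : ℕ) n with hvn | hvn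
        · have hj' : n-1-(σ ⟨j, by omega⟩ : ℕ) < j := by omega
          have h3 := (IH _ hj' (by omega)).2
          have h4 : (σ ⟨n+(n-1-(σ ⟨j, by omega⟩ : ℕ)), by omega⟩ : ℕ)
              = (σ ⟨j, by omega⟩ : ℕ) := by omega
          have h5 := inj _ _ h4
          simp only [Fin.val_mk] at h5
          omega
        · have hj' : (σ ⟨j, by omega⟩ : ℕ) - n < j := by omega
          have h3 := (IH _ hj' (by omega)).1
          have h4 : (σ ⟨(σ ⟨j, by omega⟩ : ℕ) - n, by omega⟩ : ℕ)
              = (σ ⟨j, by omega⟩ : ℕ) := by omega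
          have h5 := inj _ _ h4
          simp only [Fin.val_mk] at h5
          omega
      refine ⟨h1, ?_⟩
      obtain ⟨hlo2, hhi2⟩ := (hb ⟨n+j, by omega⟩).2 (by simp)
      simp only [Fin.val_mk, Nat.add_sub_cancel_left] at hlo2 hhi2
      by_contra hne
      rcases Nat.lt_or_ge (σ ⟨n+j, by omega⟩ : ℕ) n with hwn | hwn
      · have hj'' : n-1-(σ ⟨n+j, by omega⟩ : ℕ) < j := by omega
        have h3 := (IH _ hj'' (by omega)).2
        have h4 : (σ ⟨n+(n-1-(σ ⟨n+j, by omega⟩ : ℕ)), by omega⟩ : ℕ)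
            = (σ ⟨n+j, by omega⟩ : ℕ) := by omega
        have h5 := inj _ _ h4
        simp only [Fin.val_mk] at h5
        omega
      · have hj'' : (σ ⟨n+j, by omega⟩ : ℕ) - n < j := by omega
        have h3 := (IH _ hj'' (by omega)).1
        have h4 : (σ ⟨(σ ⟨n+j, by omega⟩ : ℕ) - n, by omega⟩ : ℕ)
            = (σ ⟨n+j, by omega⟩ : ℕ) := by omega
        have h5 := inj _ _ h4
        simp only [Fin.val_mk] at h5
        omega
  apply Equiv.ext
  intro i
  apply Fin.ext
  rw [sigma0_apply]
  have hi2 := i.2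
  rcases Nat.lt_or_ge (i:ℕ) n with h | h
  · rw [if_pos h]
    have h3 := (key (i:ℕ) h).1
    have heq : (⟨(i:ℕ), by omega⟩ : Fin (2*n)) = i := Fin.ext rfl
    rwa [heq] at h3
  · rw [if_neg (by omega)]
    have h3 := (key ((i:ℕ)-n) (by omega)).2
    have hieq : (⟨n+((i:ℕ)-n), by omega⟩ : Fin (2*n)) = i := Fin.ext (by simp; omega)
    rw [hieq] at h3
    omega

lemma prod_sigma0 {R : Type*} [CommRing R] (n : ℕ) (hn : 1 ≤ n) (t : R) :
    (∏ i : Fin (2*n), Cmat n t (sigma0 n i) i) = t ^ (n.choose 2) := by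
  have hterm : ∀ i : Fin (2*n), Cmat n t (sigma0 n i) i
      = if (i:ℕ) < n then t^(i:ℕ) else 1 := by
    intro i
    have hi2 := i.2
    have hs := sigma0_apply n i
    rcases Nat.lt_or_ge (i:ℕ) n with h | h
    · have hs' : ((sigma0 n i : Fin (2*n)) : ℕ) = n + (i:ℕ) := by rw [hs, if_pos h]
      rw [if_pos h]
      simp only [Cmat, Matrix.of_apply, if_pos h, hs']
      rw [if_pos (by omega)]
      have h1 : (n + (i:ℕ) - (n - (i:ℕ)))/2 = (i:ℕ) := by omega
      rw [h1, Nat.choose_self]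
      simp
    · have hs' : ((sigma0 n i : Fin (2*n)) : ℕ) = 2*n-1-(i:ℕ) := by rw [hs, if_neg (by omega)]
      rw [if_neg (by omega)]
      simp only [Cmat, Matrix.of_apply, if_neg (show ¬ (i:ℕ) < n by omega), hs']
      rw [if_pos (by omega)]
      have h1 : (2*n-1-(i:ℕ) - (n - 1 - ((i:ℕ)-n)))/2 = 0 := by omega
      rw [h1, Nat.choose_zero_right]
      simp
  calc (∏ i : Fin (2*n), Cmat n t (sigma0 n i) i)
      = ∏ i : Fin (2*n), (if (i:ℕ) < n then t^(i:ℕ) else 1) :=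
        Finset.prod_congr rfl fun i _ => hterm i
    _ = ∏ k ∈ Finset.range (2*n), (if k < n then t^k else 1) :=
        Fin.prod_univ_eq_prod_range (fun k => if k < n then t^k else 1) (2*n)
    _ = t ^ (n.choose 2) := by
        have h2 : 2*n = n + n := two_mul n
        rw [h2, Finset.prod_range_add]
        have hA : (∏ k ∈ Finset.range n, if k < n then t^k else 1) = ∏ k ∈ Finset.range n, t^k := by
          refine Finset.prod_congr rfl fun k hk => ?_
          rw [if_pos (Finset.mem_range.mp hk)]
        have hB : (∏ k ∈ Finset.range n, if n + k < n then t^(n+k) else 1) = 1 := by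
          apply Finset.prod_eq_one
          intro k _
          rw [if_neg (by omega)]
        rw [hA, hB, mul_one, Finset.prod_pow_eq_pow_sum, Finset.sum_range_id,
          Nat.choose_two_right]

lemma det_Cmat {R : Type*} [CommRing R] (n : ℕ) (hn : 1 ≤ n) (t : R) :
    (Cmat n t).det = ((Equiv.Perm.sign (sigma0 n) : ℤ) : R) * t ^ (n.choose 2) := by
  rw [Matrix.det_apply']
  rw [Finset.sum_eq_single (sigma0 n)]
  · rw [prod_sigma0 n hn t]
  · intro σ _ hne
    suffices h : (∏ i : Fin (2*n), Cmat n t (σ i) i) = 0 by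
      rw [h, mul_zero]
    by_cases hall : ∀ j : Fin (2*n),
        ((j:ℕ) < n → (n - (j:ℕ) ≤ (σ j : ℕ) ∧ ((σ j : ℕ) - (n - (j:ℕ))) % 2 = 0
            ∧ (σ j : ℕ) ≤ (n - (j:ℕ)) + 2*(j:ℕ))) ∧
        (n ≤ (j:ℕ) → (n - 1 - ((j:ℕ)-n) ≤ (σ j : ℕ) ∧ ((σ j : ℕ) - (n - 1 - ((j:ℕ)-n))) % 2 = 0
            ∧ (σ j : ℕ) ≤ (n-1-((j:ℕ)-n)) + 2*((j:ℕ)-n)))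
    · exact absurd (sigma_unique n hn σ (fun j => ⟨fun h => ⟨((hall j).1 h).1, ((hall j).1 h).2.2⟩,
        fun h => ⟨((hall j).2 h).1, ((hall j).2 h).2.2⟩⟩)) hne
    · obtain ⟨j, hj⟩ := not_forall.mp hall
      apply Finset.prod_eq_zero (Finset.mem_univ j)
      simp only [Cmat, Matrix.of_apply]
      rcases Nat.lt_or_ge (j:ℕ) n with h | h
      · rw [if_pos h, if_neg]
        intro hP
        exact hj ⟨fun _ => hP, fun hge => absurd hge (by omega)⟩
      · rw [if_neg (by omega), if_neg]
        intro hQ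
        exact hj ⟨fun hlt => absurd hlt (by omega), fun _ => hQ⟩
  · intro h
    exact absurd (Finset.mem_univ _) h

end VdetSubsAux

/-- Proposition `prop:subs`:
`V^n(X, 1+tX²; X, 1) = (−1)^{n(n−1)/2} t^{n(n−1)/2} Π_{i<j}(x_i − x_j)`,
a polynomial identity (stated over an arbitrary commutative ring). -/
theorem Vdet_subs (R : Type*) [CommRing R] (n : ℕ) (hn : 1 ≤ n)
    (x : Fin (2 * n) → R) (t : R) :
    Vdet n x (fun i => 1 + t * x i ^ 2) x 1 =
      (-1) ^ n.choose 2 * t ^ n.choose 2 * ∏ i : Fin (2 * n), ∏ j ∈ Ioi i, (x i - x j) := by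
  have hMeq : (Matrix.of fun i j : Fin (2 * n) =>
      if (j : ℕ) < n then x i * x i ^ (n - 1 - (j : ℕ)) * ((fun i => 1 + t * x i ^ 2) i) ^ (j : ℕ)
      else (1 : Fin (2*n) → R) i * x i ^ (2 * n - 1 - (j : ℕ)) * ((fun i => 1 + t * x i ^ 2) i) ^ ((j : ℕ) - n))
      = (Matrix.vandermonde x) * VdetSubsAux.Cmat n t := by
    rw [← VdetSubsAux.factor n hn x t]
    ext i j
    simp only [Matrix.of_apply, Pi.one_apply]
  rw [Vdet, hMeq, Matrix.det_mul, Matrix.det_vandermonde, VdetSubsAux.det_Cmat n hn t, VdetSubsAux.sign_sigma0]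
  have hflip : (∏ i : Fin (2*n), ∏ j ∈ Ioi i, (x i - x j))
      = (-1:R)^((2*n).choose 2) * ∏ i : Fin (2*n), ∏ j ∈ Ioi i, (x j - x i) := by
    have h1 : ∀ i : Fin (2*n), (∏ j ∈ Ioi i, (x i - x j))
        = (-1:R)^(Ioi i).card * ∏ j ∈ Ioi i, (x j - x i) := by
      intro i
      rw [← Finset.prod_const, ← Finset.prod_mul_distrib]
      exact Finset.prod_congr rfl fun j _ => by ring
    rw [Finset.prod_congr rfl fun i (_ : i ∈ Finset.univ) => h1 i, Finset.prod_mul_distrib,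
      Finset.prod_pow_eq_pow_sum]
    congr 2
    have hcard : ∀ i : Fin (2*n), (Ioi i).card = 2*n - 1 - (i:ℕ) := fun i => Fin.card_Ioi i
    calc (∑ i : Fin (2*n), (Ioi i).card) = ∑ i : Fin (2*n), (2*n - 1 - (i:ℕ)) :=
          Finset.sum_congr rfl fun i _ => hcard i
      _ = ∑ k ∈ Finset.range (2*n), (2*n - 1 - k) :=
          Fin.sum_univ_eq_sum_range (fun k => 2*n - 1 - k) (2*n)
      _ = ∑ k ∈ Finset.range (2*n), k := Finset.sum_range_reflect (fun i => i) (2*n)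
      _ = (2*n).choose 2 := by rw [Finset.sum_range_id, Nat.choose_two_right]
  rw [hflip]
  push_cast
  ring
end

section
/- A symmetric function f in countably many variables lies in ℚ[p_1, p_3, p_5, ...] (the subalgebra generated by odd power sums) if and only if f(t, −t, x_1, x_2, ...) = f(x_1, x_2, ...), i.e. f is invariant under adjoining two variables t and −t. -/
open MvPolynomial


variable {ι : Type*} [DecidableEq ι]

lemma aeval_update_sq_zero {A : Type*} [CommRing A] [Algebra ℚ A]
    (g : ι → A) (n : ι) (h : A) (hh : h * h = 0) (f : MvPolynomial ι ℚ) :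
    aeval (Function.update g n (g n + h)) f
      = aeval g f + h * aeval g (pderiv n f) := by
  induction f using MvPolynomial.induction_on with
  | C a => simp
  | add p q hp hq => simp only [map_add, hp, hq]; ring
  | mul_X p i hp =>
    by_cases hin : i = n
    · subst hin
      simp only [map_mul, aeval_X, Function.update_self, pderiv_mul, pderiv_X_self, map_add,
        mul_one, hp]
      linear_combination aeval g (pderiv i p) * hh
    · simp only [map_mul, aeval_X, Function.update_of_ne hin, pderiv_mul,
        pderiv_X_of_ne hin, map_add, map_mul, mul_zero, add_zero, hp]
      ring

lemma coeff_pderiv' (i : ι) (m : ι →₀ ℕ) (f : MvPolynomial ι ℚ) :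
    coeff m (pderiv i f) = (((m i : ℕ) : ℚ) + 1) * coeff (m + Finsupp.single i 1) f := by
  induction f using MvPolynomial.induction_on' with
  | add p q hp hq => simp only [map_add, coeff_add, hp, hq]; ring
  | monomial s a =>
    rw [pderiv_monomial, coeff_monomial, coeff_monomial]
    by_cases h : m + Finsupp.single i 1 = s
    · have hsub : s - Finsupp.single i 1 = m := by
        rw [← h]; exact add_tsub_cancel_right m _
      have hsi : s i = m i + 1 := by rw [← h]; simp
      rw [if_pos hsub, if_pos h.symm, hsi]
      push_cast; ring
    · have hr : (if s = m + Finsupp.single i 1 then a else 0) = 0 :=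
        if_neg (fun hs => h hs.symm)
      rw [hr, mul_zero]
      by_cases hsi : s i = 0
      · split <;> simp [hsi]
      · have h2 : s - Finsupp.single i 1 ≠ m := by
          intro h2
          apply h
          have hle : Finsupp.single i 1 ≤ s := Finsupp.single_le_iff.mpr (by omega)
          rw [← h2, tsub_add_cancel_of_le hle]
        rw [if_neg h2]

lemma not_mem_vars_of_pderiv_eq_zero {i : ι} {f : MvPolynomial ι ℚ}
    (h : pderiv i f = 0) : i ∉ f.vars := by
  intro hv
  rw [mem_vars] at hv
  obtain ⟨d, hd, hi⟩ := hv
  have hdi : d i ≠ 0 := Finsupp.mem_support_iff.mp hi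
  have key := coeff_pderiv' i (d - Finsupp.single i 1) f
  have hback : (d - Finsupp.single i 1) + Finsupp.single i 1 = d :=
    tsub_add_cancel_of_le (Finsupp.single_le_iff.mpr (by omega))
  rw [h, hback] at key
  simp only [map_zero, coeff_zero] at key
  have hc : ((((d - Finsupp.single i 1 : ι →₀ ℕ) i : ℕ) : ℚ) + 1) ≠ 0 := by positivity
  rcases mul_eq_zero.mp key.symm with h' | h'
  · exact hc h'
  · exact mem_support_iff.mp hd h'

/-- Proposition `key_lemma`:
Model the ring of symmetric functions `Λ_ℚ` as the free commutative ℚ-algebra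
`ℚ[p₁, p₂, p₃, …] = MvPolynomial {n : ℕ // 0 < n} ℚ`, with `X n` representing the
power sum `p_n`.  Adjoining two variables `t, −t` is the ℚ-algebra map
`Λ_ℚ → Λ_ℚ[t]` determined by `p_n ↦ p_n + t^n + (−t)^n`.  Then
`f ∈ ℚ[p₁, p₃, p₅, …]` if and only if `f(t, −t, x₁, x₂, …) = f(x₁, x₂, …)`,
the right-hand side being the image of `f` under the base-change `Λ_ℚ → Λ_ℚ[t]`. -/
theorem symmetric_function_odd_power_sums_iff
    (f : MvPolynomial {n : ℕ // 0 < n} ℚ) :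
    f ∈ Algebra.adjoin ℚ
        {p : MvPolynomial {n : ℕ // 0 < n} ℚ |
          ∃ n : {n : ℕ // 0 < n}, Odd (n : ℕ) ∧ p = X n} ↔
      aeval (fun n : {n : ℕ // 0 < n} =>
          (X n : MvPolynomial {n : ℕ // 0 < n} (Polynomial ℚ)) +
            C (Polynomial.X ^ (n : ℕ) + (-Polynomial.X) ^ (n : ℕ))) f =
        map (algebraMap ℚ (Polynomial ℚ)) f := by
  have hset : {p : MvPolynomial {n : ℕ // 0 < n} ℚ |
          ∃ n : {n : ℕ // 0 < n}, Odd (n : ℕ) ∧ p = X n}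
      = X '' {n : {n : ℕ // 0 < n} | Odd (n : ℕ)} := by
    ext p
    constructor
    · rintro ⟨n, hn, rfl⟩; exact ⟨n, hn, rfl⟩
    · rintro ⟨n, hn, rfl⟩; exact ⟨n, hn, rfl⟩
  rw [hset]
  set φ : {n : ℕ // 0 < n} → MvPolynomial {n : ℕ // 0 < n} (Polynomial ℚ) :=
    fun n => (X n : MvPolynomial {n : ℕ // 0 < n} (Polynomial ℚ)) +
            C (Polynomial.X ^ (n : ℕ) + (-Polynomial.X) ^ (n : ℕ)) with hφ
  constructor
  · intro hf
    induction hf using Algebra.adjoin_induction with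
    | mem x hx =>
      obtain ⟨n, hn, rfl⟩ := hx
      rw [aeval_X, map_X, hφ]
      show X n + C (Polynomial.X ^ (n : ℕ) + (-Polynomial.X) ^ (n : ℕ)) = X n
      rw [Odd.neg_pow hn]
      simp
    | algebraMap r =>
      rw [AlgHom.commutes]
      exact RingHom.congr_fun (Subsingleton.elim
        (algebraMap ℚ (MvPolynomial {n : ℕ // 0 < n} (Polynomial ℚ)))
        ((map (algebraMap ℚ (Polynomial ℚ))).comp
          (algebraMap ℚ (MvPolynomial {n : ℕ // 0 < n} ℚ)))) r
    | add x y hx hy ihx ihy => rw [map_add, map_add, ihx, ihy]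
    | mul x y hx hy ihx ihy => rw [map_mul, map_mul, ihx, ihy]
  · intro H
    have main : ∀ (k : ℕ), ∀ n : {n : ℕ // 0 < n}, (n : ℕ) = k → Even k → n ∉ f.vars := by
      intro k
      induction k using Nat.strong_induction_on with
      | _ k IH =>
        intro n0 hn0 hk
        have hk1 : 1 ≤ k := hn0 ▸ n0.2
        set I : Ideal (Polynomial ℚ) := Ideal.span {(Polynomial.X : Polynomial ℚ) ^ (k + 1)}
          with hI
        set q : Polynomial ℚ →+* Polynomial ℚ ⧸ I := Ideal.Quotient.mk I with hq
        set ε : Polynomial ℚ ⧸ I := q Polynomial.X with hε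
        have hεn : ∀ n : ℕ, k + 1 ≤ n → ε ^ n = 0 := by
          intro n hn
          have h0 : ε ^ (k + 1) = 0 := by
            rw [hε, ← map_pow]
            exact Ideal.Quotient.eq_zero_iff_mem.mpr (Ideal.subset_span rfl)
          calc ε ^ n = ε ^ (k + 1) * ε ^ (n - (k + 1)) := by rw [← pow_add]; congr 1; omega
          _ = 0 := by rw [h0, zero_mul]
        -- push H through q
        have H2 := congrArg (MvPolynomial.map q) H
        rw [map_map, map_aeval] at H2
        set gX : {n : ℕ // 0 < n} → MvPolynomial {n : ℕ // 0 < n} (Polynomial ℚ ⧸ I) :=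
          fun n => X n with hgX
        set g' : {n : ℕ // 0 < n} → MvPolynomial {n : ℕ // 0 < n} (Polynomial ℚ ⧸ I) :=
          fun n => X n + C (ε ^ (n : ℕ) + (-ε) ^ (n : ℕ)) with hg'
        have hφq : (fun i => MvPolynomial.map q (φ i)) = g' := by
          funext i
          rw [hφ, hg']
          simp [map_add, map_pow, map_neg, hε]
        rw [hφq] at H2
        have conv1 : ∀ (c : ℚ →+* MvPolynomial {n : ℕ // 0 < n} (Polynomial ℚ ⧸ I))
            (g : {n : ℕ // 0 < n} → MvPolynomial {n : ℕ // 0 < n} (Polynomial ℚ ⧸ I))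
            (p : MvPolynomial {n : ℕ // 0 < n} ℚ), eval₂Hom c g p = aeval g p := by
          intro c g p
          rw [Subsingleton.elim c (algebraMap ℚ (MvPolynomial {n : ℕ // 0 < n}
            (Polynomial ℚ ⧸ I)))]
          rfl
        have e2 : (MvPolynomial.map (q.comp (algebraMap ℚ (Polynomial ℚ)))) f = aeval gX f := by
          rw [map_eq_eval₂Hom_C_comp]
          rw [conv1]
        rw [conv1, e2] at H2
        -- replace g' by an update of gX using the induction hypothesis
        set hh : MvPolynomial {n : ℕ // 0 < n} (Polynomial ℚ ⧸ I) := C (ε ^ k + (-ε) ^ k)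
          with hhh
        have e3 : aeval g' f = aeval (Function.update gX n0 (gX n0 + hh)) f := by
          rw [aeval_def, aeval_def]
          apply eval₂_congr
          intro i c hic hcoeff
          have hiv : i ∈ f.vars := (mem_vars i).mpr ⟨c, mem_support_iff.mpr hcoeff, hic⟩
          by_cases hi : i = n0
          · subst hi
            rw [Function.update_self, hg', hgX, hhh]
            show X i + C (ε ^ (i : ℕ) + (-ε) ^ (i : ℕ)) = X i + C (ε ^ k + (-ε) ^ k)
            rw [hn0]
          · rw [Function.update_of_ne hi, hg', hgX]
            show X i + C (ε ^ (i : ℕ) + (-ε) ^ (i : ℕ)) = X i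
            rcases Nat.even_or_odd (i : ℕ) with he | ho
            · have hik : (i : ℕ) ≠ k := fun h' => hi (Subtype.ext (h'.trans hn0.symm))
              rcases lt_or_gt_of_ne hik with hlt | hgt
              · exact absurd hiv (IH _ hlt i rfl he)
              · have hvneg := Even.neg_pow he ε
                rw [hvneg, hεn (i : ℕ) (by omega), add_zero, map_zero, add_zero]
            · have hvneg := Odd.neg_pow ho ε
              rw [hvneg, add_neg_cancel, map_zero, add_zero]
        have hh2 : hh * hh = 0 := by
          rw [hhh, ← map_mul]
          have : (ε ^ k + (-ε) ^ k) * (ε ^ k + (-ε) ^ k) = 4 * ε ^ (k + k) := by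
            have hvneg := Even.neg_pow hk ε
            rw [hvneg]; ring
          rw [this, hεn _ (by omega), mul_zero, map_zero]
        have e4 := aeval_update_sq_zero gX n0 hh hh2 f
        rw [e3, e4] at H2
        have e5 : hh * aeval gX (pderiv n0 f) = 0 := by
          linear_combination H2
        have e6 : aeval gX (pderiv n0 f)
            = MvPolynomial.map (q.comp (algebraMap ℚ (Polynomial ℚ))) (pderiv n0 f) := by
          rw [map_eq_eval₂Hom_C_comp]
          rw [conv1]
        have hp0 : pderiv n0 f = 0 := by
          apply MvPolynomial.ext
          intro d
          rw [coeff_zero]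
          by_contra hcc
          have hc := congrArg (coeff d) e5
          rw [hhh, e6, coeff_C_mul, coeff_map, coeff_zero, RingHom.comp_apply,
            Polynomial.algebraMap_eq] at hc
          set cc : ℚ := coeff d (pderiv n0 f) with hcceq
          have hfactor : ((Polynomial.X : Polynomial ℚ) ^ k + (-Polynomial.X) ^ k) *
              Polynomial.C cc = Polynomial.C (2 * cc) * Polynomial.X ^ k := by
            have hvneg := Even.neg_pow hk (Polynomial.X : Polynomial ℚ)
            rw [hvneg, Polynomial.C_mul, map_ofNat]
            ring
          have hzero : q (Polynomial.C (2 * cc) * Polynomial.X ^ k) = 0 := by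
            rw [← hfactor, map_mul, map_add, map_pow, map_pow, map_neg]
            exact hc
          have hdvd : (Polynomial.X : Polynomial ℚ) ^ (k + 1) ∣
              Polynomial.C (2 * cc) * Polynomial.X ^ k :=
            Ideal.mem_span_singleton.mp (Ideal.Quotient.eq_zero_iff_mem.mp hzero)
          have hne : Polynomial.C (2 * cc) * (Polynomial.X : Polynomial ℚ) ^ k ≠ 0 :=
            mul_ne_zero (Polynomial.C_ne_zero.mpr (mul_ne_zero two_ne_zero hcc))
              (pow_ne_zero _ Polynomial.X_ne_zero)
          have hdeg := Polynomial.natDegree_le_of_dvd hdvd hne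
          rw [Polynomial.natDegree_X_pow,
            Polynomial.natDegree_C_mul_X_pow k _ (mul_ne_zero two_ne_zero hcc)] at hdeg
          omega
        exact not_mem_vars_of_pderiv_eq_zero hp0
    
    have hvars : ↑f.vars ⊆ {n : {n : ℕ // 0 < n} | Odd (n : ℕ)} := by
      intro n hn
      by_contra hodd
      exact main (n : ℕ) n rfl (Nat.not_odd_iff_even.mp hodd) hn
    exact mem_supported.mpr hvars
end

section
/- Define f_n(x_1,...,x_{2n}) = V^n(X^2, 1+abcdX^4; X+aX^2, 1−a(b+c)X^2−abcX^3). Then f_{n+1}(t, −t, x_1,...,x_{2n}) = (−1)^n · 2t(1−abt^2)(1−act^2) · Π_{i=1}^{2n}(t^2 − x_i^2) · Π_{i=1}^{2n}(1 − abcd t^2 x_i^2) · f_n(x_1,...,x_{2n}). -/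
open Finset

/-- `f_m(x₁,…,x_{2m}) = V^m(X², 1+abcdX⁴; X+aX², 1−a(b+c)X²−abcX³)`. -/
def fDet {R : Type*} [CommRing R] (a b c d : R) (m : ℕ) (x : Fin (2 * m) → R) : R :=
  Vdet m (fun i => x i ^ 2) (fun i => 1 + a * b * c * d * x i ^ 4)
    (fun i => x i + a * x i ^ 2)
    (fun i => 1 - a * (b + c) * x i ^ 2 - a * b * c * x i ^ 3)

/-! The rows of `t` and `−t` have the same `X = t²` and `Y = 1 + abcd t⁴`, so both are
combinations of the two rows with `(A, B) = (1, 0)` and `(0, 1)`; the coefficients contribute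
`A(t)B(−t) − A(−t)B(t) = 2t(1 − abt²)(1 − act²)`. Within each block of columns, the operations
`Cⱼ ↦ Y(t) Cⱼ − X(t) Cⱼ₊₁` clear these two rows except in the last column of the block, and turn
the row of `xᵢ` into `Y(t)X(xᵢ) − X(t)Y(xᵢ) = (xᵢ² − t²)(1 − abcd t²xᵢ²)` times its row in the
matrix of `f_n`. Expanding along the two cleared rows leaves `f_n`. The column operations scale
the determinant by `Y(t)^{2n+2}`, which is cancelled over `R[X]` after replacing every `Y` by
`X + Y`, since `(X + Y(t))^{2n+2}` is monic. -/

open Matrix Polynomial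

section

variable {R : Type*} [CommRing R]

theorem Fin.val_succAbove_eq {m : ℕ} (p : Fin (m + 1)) (i : Fin m) :
    (p.succAbove i : ℕ) = if (i : ℕ) < p then (i : ℕ) else i + 1 := by
  unfold Fin.succAbove
  split_ifs <;> simp_all [Fin.lt_def]

theorem det_eq_mul_det_updateRow_updateRow {m : Type*} [Fintype m] [DecidableEq m]
    (M : Matrix m m R) {i₀ i₁ : m} (h : i₀ ≠ i₁) (u v : m → R) (α β γ δ : R)
    (h₀ : M i₀ = α • u + β • v) (h₁ : M i₁ = γ • u + δ • v) :
    M.det = (α * δ - β * γ) * ((M.updateRow i₀ u).updateRow i₁ v).det := by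
  set D : (m → R) → (m → R) → R := fun r s => ((M.updateRow i₀ r).updateRow i₁ s).det with hD
  have add_left : ∀ r r' s, D (r + r') s = D r s + D r' s := fun r r' s => by
    simp only [hD, updateRow_comm _ h, det_updateRow_add]
  have smul_left : ∀ (c : R) r s, D (c • r) s = c * D r s := fun c r s => by
    simp only [hD, updateRow_comm _ h, det_updateRow_smul]
  have add_right : ∀ r s s', D r (s + s') = D r s + D r s' := fun r s s' =>
    det_updateRow_add _ _ _ _
  have smul_right : ∀ (c : R) r s, D r (c • s) = c * D r s := fun c r s =>
    det_updateRow_smul _ _ _ _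
  have diag : ∀ r, D r r = 0 := fun r =>
    det_zero_of_row_eq h (by simp [updateRow_ne h])
  have antisymm : D v u = -D u v := by
    have := diag (u + v)
    rw [add_left, add_right, add_right, diag, diag] at this
    linear_combination this
  have hM : M.det = D (M i₀) (M i₁) := by simp [hD]
  rw [hM, h₀, h₁]
  simp only [add_left, add_right, smul_left, smul_right, diag, antisymm]
  ring

theorem det_succ_of_row_zero_eq_single {m : ℕ} (A : Matrix (Fin (m + 1)) (Fin (m + 1)) R)
    (p : Fin (m + 1)) (c : R) (hA : A 0 = Pi.single p c) :
    A.det = (-1) ^ (p : ℕ) * c * (A.submatrix Fin.succ p.succAbove).det := by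
  rw [det_succ_row_zero, Finset.sum_eq_single p]
  · simp [hA]
  · intro j _ hj
    simp [hA, hj]
  · simp

theorem det_eq_of_rows_zero_one_eq_single {m : ℕ} (A : Matrix (Fin (m + 2)) (Fin (m + 2)) R)
    (p : Fin (m + 2)) (q : Fin (m + 1)) (c₀ c₁ : R)
    (h₀ : A 0 = Pi.single p c₀) (h₁ : A 1 = Pi.single (p.succAbove q) c₁) :
    A.det = (-1) ^ ((p : ℕ) + q) * c₀ * c₁ *
      (A.submatrix (Fin.succ ∘ Fin.succ) (p.succAbove ∘ q.succAbove)).det := by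
  have h₁' : A.submatrix Fin.succ p.succAbove 0 = Pi.single q c₁ := by
    funext j
    simp only [submatrix_apply, Fin.succ_zero_eq_one, h₁, Pi.single_apply,
      Fin.succAbove_right_inj]
  rw [det_succ_of_row_zero_eq_single A p c₀ h₀, det_succ_of_row_zero_eq_single _ q c₁ h₁',
    submatrix_submatrix, pow_add]
  ring

def vEntry (m : ℕ) (x y a b : R) (j : ℕ) : R :=
  if j < m then a * x ^ (m - 1 - j) * y ^ j else b * x ^ (2 * m - 1 - j) * y ^ (j - m)

def vMat (m : ℕ) (x y a b : Fin (2 * m) → R) : Matrix (Fin (2 * m)) (Fin (2 * m)) R :=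
  of fun i j => vEntry m (x i) (y i) (a i) (b i) j

theorem Vdet_eq_det_vMat (m : ℕ) (x y a b : Fin (2 * m) → R) :
    Vdet m x y a b = (vMat m x y a b).det := rfl

theorem Vdet_map {S : Type*} [CommRing S] (φ : R →+* S) (m : ℕ) (x y a b : Fin (2 * m) → R) :
    φ (Vdet m x y a b) = Vdet m (fun i => φ (x i)) (fun i => φ (y i)) (fun i => φ (a i))
      (fun i => φ (b i)) := by
  rw [Vdet, RingHom.map_det]
  congr 1
  ext i j
  simp [apply_ite φ]

theorem vEntry_eq_add (m : ℕ) (x y a b : R) (j : ℕ) :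
    vEntry m x y a b j = a * vEntry m x y 1 0 j + b * vEntry m x y 0 1 j := by
  unfold vEntry
  split_ifs <;> ring

theorem vEntry_succ_n (n : ℕ) (x y a b : R) : vEntry (n + 1) x y a b n = a * y ^ n := by
  simp [vEntry]

theorem vEntry_succ_two_mul_add_one (n : ℕ) (x y a b : R) :
    vEntry (n + 1) x y a b (2 * n + 1) = b * y ^ n := by
  simp [vEntry, show 2 * (n + 1) - 1 - (2 * n + 1) = 0 by omega,
    show 2 * n + 1 - (n + 1) = n by omega, show ¬ 2 * n + 1 < n + 1 by omega]

theorem vEntry_succ_shift {n k : ℕ} (hk : k < 2 * n + 1) (hkn : k ≠ n) (ξ η x y a b : R) :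
    η * vEntry (n + 1) x y a b k - ξ * vEntry (n + 1) x y a b (k + 1)
      = (η * x - ξ * y) * vEntry n x y a b (if k < n then k else k - 1) := by
  unfold vEntry
  by_cases hkn' : k < n
  · simp only [hkn', if_true, show k < n + 1 by omega, show k + 1 < n + 1 by omega]
    rw [show n + 1 - 1 - k = n - 1 - k + 1 by omega, show n + 1 - 1 - (k + 1) = n - 1 - k by omega]
    ring
  · simp only [hkn', if_false, show ¬ k < n + 1 by omega, show ¬ k + 1 < n + 1 by omega,
      show ¬ k - 1 < n by omega]
    rw [show 2 * (n + 1) - 1 - k = 2 * n - 1 - (k - 1) + 1 by omega,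
      show 2 * (n + 1) - 1 - (k + 1) = 2 * n - 1 - (k - 1) by omega,
      show k - (n + 1) = k - 1 - n by omega, show k + 1 - (n + 1) = k - 1 - n + 1 by omega]
    ring

/-- The column operations `Cⱼ ↦ η Cⱼ − ξ Cⱼ₊₁`, except on the last column of each block
(`j = n` and `j = 2n + 1`), which is only multiplied by `η`. -/
def colOp (n : ℕ) (ξ η : R) : Matrix (Fin (2 * (n + 1))) (Fin (2 * (n + 1))) R :=
  of fun k j => (if (k : ℕ) = j then η else 0) + (if (k : ℕ) = j + 1 ∧ (j : ℕ) ≠ n then -ξ else 0)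

theorem det_colOp (n : ℕ) (ξ η : R) : (colOp n ξ η).det = η ^ (2 * (n + 1)) := by
  rw [det_of_isLowerTriangular]
  · simp [colOp]
  · intro k j hkj
    have : (k : ℕ) < j := hkj
    simp only [colOp, of_apply]
    rw [if_neg (by omega), if_neg (by omega), add_zero]

theorem sum_mul_colOp (n : ℕ) (ξ η : R) (r : ℕ → R) (j : Fin (2 * (n + 1))) :
    ∑ k : Fin (2 * (n + 1)), r k * colOp n ξ η k j
      = η * r j - if (j : ℕ) = n ∨ (j : ℕ) = 2 * n + 1 then 0 else ξ * r (j + 1) := by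
  simp only [colOp, of_apply, mul_add, Finset.sum_add_distrib]
  rw [Fin.sum_univ_eq_sum_range (fun k => r k * if k = j then η else 0),
    Fin.sum_univ_eq_sum_range (fun k => r k * if k = j + 1 ∧ (j : ℕ) ≠ n then -ξ else 0)]
  simp only [mul_ite, mul_zero, ite_and, Finset.sum_ite_eq', Finset.mem_range]
  have := j.isLt
  split_ifs <;> first | omega | ring

section colOp

variable {n : ℕ} (ξ η : R) (x y a b : Fin (2 * (n + 1)) → R)

theorem vMat_mul_colOp_apply (i j : Fin (2 * (n + 1))) :
    (vMat (n + 1) x y a b * colOp n ξ η) i j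
      = η * vEntry (n + 1) (x i) (y i) (a i) (b i) j
        - if (j : ℕ) = n ∨ (j : ℕ) = 2 * n + 1 then 0
          else ξ * vEntry (n + 1) (x i) (y i) (a i) (b i) (j + 1) :=
  (mul_apply ..).trans (sum_mul_colOp n ξ η (vEntry (n + 1) (x i) (y i) (a i) (b i)) j)

theorem vMat_mul_colOp_row_of_eq {i : Fin (2 * (n + 1))} (hx : x i = ξ) (hy : y i = η) :
    (vMat (n + 1) x y a b * colOp n ξ η) i
      = Pi.single ⟨n, by omega⟩ (η ^ (n + 1) * a i)
        + Pi.single ⟨2 * n + 1, by omega⟩ (η ^ (n + 1) * b i) := by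
  funext j
  rw [vMat_mul_colOp_apply, hx, hy]
  simp only [Pi.add_apply, Pi.single_apply, Fin.ext_iff]
  by_cases hjn : (j : ℕ) = n
  · simp [hjn, vEntry_succ_n, show n ≠ 2 * n + 1 by omega]
    ring
  by_cases hjl : (j : ℕ) = 2 * n + 1
  · simp [hjl, vEntry_succ_two_mul_add_one, show 2 * n + 1 ≠ n by omega]
    ring
  simp only [hjn, hjl, or_self, if_false, vEntry_succ_shift (by omega) hjn]
  ring

theorem vMat_mul_colOp_succAbove (i : Fin (2 * (n + 1))) (j : Fin (2 * n)) :
    (vMat (n + 1) x y a b * colOp n ξ η) i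
        ((⟨n, by omega⟩ : Fin (2 * n + 2)).succAbove
          ((⟨2 * n, by omega⟩ : Fin (2 * n + 1)).succAbove j))
      = (η * x i - ξ * y i) * vEntry n (x i) (y i) (a i) (b i) j := by
  have hj := j.isLt
  rw [vMat_mul_colOp_apply]
  simp only [Fin.val_succAbove_eq, hj, if_true]
  by_cases hjn : (j : ℕ) < n
  · simp only [hjn, if_true, show ¬((j : ℕ) = n ∨ (j : ℕ) = 2 * n + 1) by omega, if_false,
      vEntry_succ_shift (by omega) hjn.ne]
  · simp only [hjn, if_false, show ¬((j : ℕ) + 1 = n ∨ (j : ℕ) + 1 = 2 * n + 1) by omega,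
      vEntry_succ_shift (by omega) (by omega : (j : ℕ) + 1 ≠ n), show ¬(j : ℕ) + 1 < n by omega,
      Nat.add_sub_cancel]

end colOp

theorem Vdet_eq_mul_Vdet_update {m : ℕ} (x y a b : Fin (2 * m) → R) {i₀ i₁ : Fin (2 * m)}
    (h : i₀ ≠ i₁) (hx : x i₀ = x i₁) (hy : y i₀ = y i₁) :
    Vdet m x y a b = (a i₀ * b i₁ - a i₁ * b i₀) *
      Vdet m x y (Function.update (Function.update a i₀ 1) i₁ 0)
        (Function.update (Function.update b i₀ 0) i₁ 1) := by
  rw [Vdet_eq_det_vMat, Vdet_eq_det_vMat, det_eq_mul_det_updateRow_updateRow _ h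
    (fun j => vEntry m (x i₀) (y i₀) 1 0 j) (fun j => vEntry m (x i₀) (y i₀) 0 1 j)
    (a i₀) (b i₀) (a i₁) (b i₁)]
  · rw [mul_comm (b i₀)]
    congr 2
    ext i j
    simp only [updateRow_apply, vMat, of_apply, Function.update_apply]
    split_ifs <;> subst_vars <;> simp_all
  · funext j
    simp [vMat, vEntry_eq_add m (x i₀) (y i₀) (a i₀) (b i₀)]
  · funext j
    simp [vMat, ← hx, ← hy, vEntry_eq_add m (x i₀) (y i₀) (a i₁) (b i₁)]

theorem Vdet_succ_mul_pow {n : ℕ} (x y a b : Fin (2 * (n + 1)) → R) (hx : x 0 = x 1)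
    (hy : y 0 = y 1) :
    y 0 ^ (2 * (n + 1)) * Vdet (n + 1) x y a b = y 0 ^ (2 * (n + 1)) *
      ((-1) ^ n * (a 0 * b 1 - a 1 * b 0) *
        (∏ i : Fin (2 * n), (y 0 * x i.succ.succ - x 0 * y i.succ.succ)) *
        Vdet n (fun i => x i.succ.succ) (fun i => y i.succ.succ) (fun i => a i.succ.succ)
          (fun i => b i.succ.succ)) := by
  set a' := Function.update (Function.update a 0 1) 1 0
  set b' := Function.update (Function.update b 0 0) 1 1
  have h01 : (0 : Fin (2 * (n + 1))) ≠ 1 := by simp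
  have hrow₀ : (vMat (n + 1) x y a' b' * colOp n (x 0) (y 0)) 0
      = Pi.single ⟨n, by omega⟩ (y 0 ^ (n + 1)) := by
    rw [vMat_mul_colOp_row_of_eq _ _ _ _ _ _ rfl rfl]
    simp [a', b']
  have hrow₁ : (vMat (n + 1) x y a' b' * colOp n (x 0) (y 0)) 1
      = Pi.single ((⟨n, by omega⟩ : Fin (2 * n + 2)).succAbove ⟨2 * n, by omega⟩)
        (y 0 ^ (n + 1)) := by
    rw [vMat_mul_colOp_row_of_eq _ _ _ _ _ _ hx.symm hy.symm]
    have : (⟨n, by omega⟩ : Fin (2 * n + 2)).succAbove ⟨2 * n, by omega⟩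
        = ⟨2 * n + 1, by omega⟩ := by
      ext
      simp [Fin.val_succAbove_eq]
      omega
    simp [a', b', this]
  have hminor : (vMat (n + 1) x y a' b' * colOp n (x 0) (y 0)).submatrix (Fin.succ ∘ Fin.succ)
      ((⟨n, by omega⟩ : Fin (2 * n + 2)).succAbove ∘
        (⟨2 * n, by omega⟩ : Fin (2 * n + 1)).succAbove)
      = of fun i j => (y 0 * x i.succ.succ - x 0 * y i.succ.succ) *
          vMat n (fun i => x i.succ.succ) (fun i => y i.succ.succ) (fun i => a i.succ.succ)
            (fun i => b i.succ.succ) i j := by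
    ext i j
    rw [submatrix_apply, Function.comp_apply, Function.comp_apply, vMat_mul_colOp_succAbove]
    simp [vMat, a', b', Fin.ext_iff]
  calc y 0 ^ (2 * (n + 1)) * Vdet (n + 1) x y a b
      = (a 0 * b 1 - a 1 * b 0) * (vMat (n + 1) x y a' b' * colOp n (x 0) (y 0)).det := by
        rw [det_mul, det_colOp, Vdet_eq_mul_Vdet_update x y a b h01 hx hy, Vdet_eq_det_vMat]
        ring
    _ = _ := by
        rw [det_eq_of_rows_zero_one_eq_single (m := 2 * n) _ _ _ _ _ hrow₀ hrow₁, hminor,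
          det_mul_column, ← Vdet_eq_det_vMat]
        simp only [pow_add, pow_mul, neg_one_sq, one_pow]
        ring

theorem Vdet_succ_of_eq {n : ℕ} (x y a b : Fin (2 * (n + 1)) → R) (hx : x 0 = x 1)
    (hy : y 0 = y 1) :
    Vdet (n + 1) x y a b =
      (-1) ^ n * (a 0 * b 1 - a 1 * b 0) *
        (∏ i : Fin (2 * n), (y 0 * x i.succ.succ - x 0 * y i.succ.succ)) *
        Vdet n (fun i => x i.succ.succ) (fun i => y i.succ.succ) (fun i => a i.succ.succ)
          (fun i => b i.succ.succ) := by
  have key := Vdet_succ_mul_pow (fun i => C (x i)) (fun i => X + C (y i)) (fun i => C (a i))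
    (fun i => C (b i)) (by simp [hx]) (by simp [hy])
  have := congrArg (evalRingHom 0) (((monic_X_add_C (y 0)).pow _).isRegular.left key)
  simp only [map_mul, map_prod, Vdet_map] at this
  simpa using this

end

/-- Proposition `prop:numer`:
`f_{n+1}(t, −t, x₁,…,x_{2n}) = (−1)ⁿ · 2t(1−abt²)(1−act²) · Π(t² − x_i²) ·
  Π(1 − abcd t² x_i²) · f_n(x₁,…,x_{2n})`. -/
theorem fDet_specialize (R : Type*) [CommRing R] (a b c d t : R) (n : ℕ)
    (x : Fin (2 * n) → R) :
    fDet a b c d (n + 1) (Fin.cons t (Fin.cons (-t) x)) =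
      (-1) ^ n * (2 * t * (1 - a * b * t ^ 2) * (1 - a * c * t ^ 2)) *
        (∏ i : Fin (2 * n), (t ^ 2 - x i ^ 2)) *
        (∏ i : Fin (2 * n), (1 - a * b * c * d * t ^ 2 * x i ^ 2)) *
        fDet a b c d n x := by
  have hprod : ∏ i : Fin (2 * n), ((1 + a * b * c * d * t ^ 4) * x i ^ 2
        - t ^ 2 * (1 + a * b * c * d * x i ^ 4))
      = (∏ i : Fin (2 * n), (t ^ 2 - x i ^ 2)) *
        ∏ i : Fin (2 * n), (1 - a * b * c * d * t ^ 2 * x i ^ 2) := by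
    rw [← prod_mul_distrib]
    calc _ = ∏ i : Fin (2 * n), -((t ^ 2 - x i ^ 2) * (1 - a * b * c * d * t ^ 2 * x i ^ 2)) :=
          prod_congr rfl fun i _ => by ring
      _ = _ := by simp [prod_neg, pow_mul]
  have hz₀ : (Fin.cons t (Fin.cons (-t) x) : Fin (2 * (n + 1)) → R) 0 = t := rfl
  have hz₁ : (Fin.cons t (Fin.cons (-t) x) : Fin (2 * (n + 1)) → R) 1 = -t := rfl
  rw [fDet, fDet, Vdet_succ_of_eq _ _ _ _ (by simp [hz₁])
    (by simp [hz₁, Even.neg_pow (by decide : Even 4)])]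
  simp only [Fin.cons_succ, hz₀, hz₁, hprod]
  ring
end
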